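/- arXiv:2302.10662 — 5 statements merged into one kernel-verified Lean document; each statement's English description precedes it below -/
import Mathlib

section
/- If a graph G contains a ladder of length at least 2 (a 2×3 grid as induced subgraph attached to the rest of G only via its four cornerpoints) that is not disconnecting (the pair of horizontal edges of a square do not form an edge cut of G), then G contains a K4 minor, and hence the treewidth of G is at least 3. -/
open SimpleGraph

/-- The ladder of length `k`: the `2 × (k+1)` grid graph. -/
def ladder (k : ℕ) : SimpleGraph (Fin 2 × Fin (k + 1)) :=
  SimpleGraph.fromRel fun p q =>
    (p.1 = q.1 ∧ p.2.val + 1 = q.2.val) ∨ (p.2 = q.2 ∧ p.1 ≠ q.1)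

/-- `G` contains a ladder of length `k`: an induced copy of the `2 × (k+1)` grid,
attached to the rest of `G` only via its four cornerpoints (the vertices in columns `0` and `k`). -/
structure ContainsLadder {V : Type} (G : SimpleGraph V) (k : ℕ) where
  f : Fin 2 × Fin (k + 1) → V
  inj : Function.Injective f
  induced : ∀ p q, G.Adj (f p) (f q) ↔ (ladder k).Adj p q
  attach : ∀ p : Fin 2 × Fin (k + 1), p.2.val ≠ 0 → p.2.val ≠ k →
    ∀ v : V, G.Adj (f p) v → v ∈ Set.range f

/-- The two horizontal edges of square `i` of the ladder form an edge cut of `G`. -/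
def ContainsLadder.SquareCut {V : Type} {G : SimpleGraph V} {k : ℕ}
    (L : ContainsLadder G k) (i : Fin k) : Prop :=
  ¬ (G.deleteEdges {s(L.f (0, i.castSucc), L.f (0, i.succ)),
      s(L.f (1, i.castSucc), L.f (1, i.succ))}).Connected

/-- The ladder is disconnecting: the horizontal edges of some square form an edge cut. -/
def ContainsLadder.Disconnects {V : Type} {G : SimpleGraph V} {k : ℕ}
    (L : ContainsLadder G k) : Prop :=
  ∃ i : Fin k, L.SquareCut i

/-- A tree decomposition of a graph. -/
structure TreeDecomp {V : Type} (G : SimpleGraph V) where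
  ι : Type
  [fin : Fintype ι]
  tree : SimpleGraph ι
  isTree : tree.IsTree
  bag : ι → Finset V
  cover_vertex : ∀ v : V, ∃ i, v ∈ bag i
  cover_edge : ∀ ⦃u v : V⦄, G.Adj u v → ∃ i, u ∈ bag i ∧ v ∈ bag i
  bag_connected : ∀ v : V, (tree.induce {i | v ∈ bag i}).Connected

/-- The width of a tree decomposition: maximum bag size minus one. -/
def TreeDecomp.width {V : Type} {G : SimpleGraph V} (td : TreeDecomp G) : ℕ :=
  letI := td.fin
  (Finset.univ.sup fun i => (td.bag i).card) - 1

/-- The treewidth of a graph: minimum width over all tree decompositions. -/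
noncomputable def treewidth {V : Type} (G : SimpleGraph V) : ℕ :=
  sInf (Set.range fun td : TreeDecomp G => td.width)

/-- `H` is a minor of `G`: witnessed by pairwise disjoint nonempty connected branch sets. -/
def IsMinor {W V : Type} (H : SimpleGraph W) (G : SimpleGraph V) : Prop :=
  ∃ φ : W → Set V, (∀ w, (φ w).Nonempty) ∧ (∀ w, (G.induce (φ w)).Connected) ∧
    (∀ w w', w ≠ w' → Disjoint (φ w) (φ w')) ∧
    (∀ w w', H.Adj w w' → ∃ u ∈ φ w, ∃ v ∈ φ w', G.Adj u v)

/-- Lengthen the ladder `L` by `m` squares, by inserting `m` new rungs between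
columns `0` and `1` (subdividing the two horizontal edges and adding rungs). -/
def extendLadder {V : Type} (G : SimpleGraph V) {k : ℕ} (L : ContainsLadder G k) (m : ℕ) :
    SimpleGraph (V ⊕ (Fin 2 × Fin m)) :=
  SimpleGraph.fromRel fun p q =>
    (∃ u v : V, p = Sum.inl u ∧ q = Sum.inl v ∧ G.Adj u v ∧
      (m ≠ 0 → ∀ a : Fin 2, s(u, v) ≠ s(L.f (a, 0), L.f (a, 1)))) ∨
    (∃ (a : Fin 2) (j : Fin m), j.val = 0 ∧ p = Sum.inl (L.f (a, 0)) ∧ q = Sum.inr (a, j)) ∨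
    (∃ (a : Fin 2) (j : Fin m), j.val = m - 1 ∧ p = Sum.inr (a, j) ∧ q = Sum.inl (L.f (a, 1))) ∨
    (∃ (a : Fin 2) (j j' : Fin m), j.val + 1 = j'.val ∧ p = Sum.inr (a, j) ∧ q = Sum.inr (a, j')) ∨
    (∃ (a b : Fin 2) (j : Fin m), a ≠ b ∧ p = Sum.inr (a, j) ∧ q = Sum.inr (b, j))

/-- Insert one new rung into square `i` of the ladder `L`: two new vertices `inr 0, inr 1`
subdividing the horizontal edges of square `i`, joined by an edge. -/
def insertRung {V : Type} (G : SimpleGraph V) {k : ℕ} (L : ContainsLadder G k) (i : Fin k) :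
    SimpleGraph (V ⊕ Fin 2) :=
  SimpleGraph.fromRel fun p q =>
    (∃ u v : V, p = Sum.inl u ∧ q = Sum.inl v ∧ G.Adj u v ∧
      ∀ a : Fin 2, s(u, v) ≠ s(L.f (a, i.castSucc), L.f (a, i.succ))) ∨
    (∃ a : Fin 2, p = Sum.inl (L.f (a, i.castSucc)) ∧ q = Sum.inr a) ∨
    (∃ a : Fin 2, p = Sum.inr a ∧ q = Sum.inl (L.f (a, i.succ))) ∨
    (p = Sum.inr (0 : Fin 2) ∧ q = Sum.inr (1 : Fin 2))

/-- Contract the edge `{u, v}` of `G`: merge `v` into `u`. -/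
def contractEdge {V : Type} (G : SimpleGraph V) (u v : V) : SimpleGraph {x : V // x ≠ v} :=
  SimpleGraph.fromRel fun x y =>
    G.Adj x.val y.val ∨ (x.val = u ∧ G.Adj v y.val) ∨ (y.val = u ∧ G.Adj x.val v)

/-- Subdivide the edge `{u, v}` of `G` with a new vertex. -/
def subdivide {V : Type} (G : SimpleGraph V) (u v : V) : SimpleGraph (V ⊕ Unit) :=
  SimpleGraph.fromRel fun p q =>
    (∃ x y : V, p = Sum.inl x ∧ q = Sum.inl y ∧ G.Adj x y ∧ s(x, y) ≠ s(u, v)) ∨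
    (p = Sum.inl u ∧ q = Sum.inr ()) ∨ (p = Sum.inl v ∧ q = Sum.inr ())

/-- Suppress the degree-2 vertex `v` with neighbours `a` and `b`:
delete `v` and add the edge `{a, b}` (if not already present). -/
def suppress {V : Type} (G : SimpleGraph V) (v a b : V) : SimpleGraph {x : V // x ≠ v} :=
  SimpleGraph.fromRel fun x y =>
    G.Adj x.val y.val ∨ (x.val = a ∧ y.val = b)

/-- A graph is chordal if every cycle on at least 4 vertices has a chord. -/
def IsChordal {V : Type} (G : SimpleGraph V) : Prop :=
  ∀ n : ℕ, ∀ f : Fin (n + 4) → V, Function.Injective f →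
    (∀ i : Fin (n + 4), G.Adj (f i) (f (i + 1))) →
    ∃ i j : Fin (n + 4), i ≠ j ∧ j ≠ i + 1 ∧ i ≠ j + 1 ∧ G.Adj (f i) (f j)

/-- The induced subgraph on `S` has no cutvertex. -/
def NoCutvertex {V : Type} (G : SimpleGraph V) (S : Set V) : Prop :=
  ∀ v ∈ S, ∀ x y : ↥(S \ {v}), (G.induce (S \ {v})).Reachable x y

/-- `S` is a block (biconnected component) of `G`: a maximal connected
vertex set without a cutvertex. -/
def IsBlock {V : Type} (G : SimpleGraph V) (S : Set V) : Prop :=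
  S.Nonempty ∧ (G.induce S).Connected ∧ NoCutvertex G S ∧
  ∀ T : Set V, S ⊆ T → (G.induce T).Connected → NoCutvertex G T → T = S


/-!
Let square `i ≥ 1` of the ladder lie between its middle column `m = i` and right column
`r = i + 1`, and let `l = i - 1` be the column left of it. Since the two horizontal edges of
the square are not an edge cut, deleting them leaves a walk from column `r` back to columns
`l, m`; the middle vertices have no other neighbours left, so the walk first meets these two
columns in column `l`. The two middle vertices, the rung in column `l`, and the rung in column
`r` together with the walk are the branch sets of a `K₄` minor.

In a tree decomposition, the nodes whose bags meet a connected vertex set form a subtree. The four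
branch sets give four pairwise intersecting subtrees; by the Helly property of subtrees some bag
meets all four branch sets, so it has at least four vertices.
-/

namespace SimpleGraph

variable {V : Type*} {G : SimpleGraph V}

lemma Walk.IsPath.append_of_support_inter {u v w : V} {p : G.Walk u v} {q : G.Walk v w}
    (hp : p.IsPath) (hq : q.IsPath) (hpq : ∀ x ∈ p.support, x ∈ q.support → x = v) :
    (p.append q).IsPath := by
  rw [Walk.isPath_def, Walk.support_append, List.nodup_append]
  refine ⟨hp.support_nodup, hq.support_nodup.sublist q.support.tail_sublist, ?_⟩
  rintro x hxp y hy rfl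
  obtain rfl := hpq x hxp (List.mem_of_mem_tail hy)
  have hv := hq.support_nodup
  rw [← q.cons_tail_support] at hv
  exact (List.nodup_cons.mp hv).1 hy

lemma Walk.exists_adj_of_notMem_of_mem {T : Set V} {a b : V} (p : G.Walk a b)
    (ha : a ∉ T) (hb : b ∈ T) :
    ∃ (d : V) (q : G.Walk a d), (∀ v ∈ q.support, v ∉ T) ∧ ∃ c ∈ T, G.Adj d c := by
  induction p with
  | nil => exact absurd hb ha
  | @cons a x b hax p ih =>
    by_cases hx : x ∈ T
    · exact ⟨a, .nil, by simpa using ha, x, hx, hax⟩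
    · obtain ⟨d, q, hq, hd⟩ := ih hx hb
      exact ⟨d, .cons hax q, by simpa [ha] using hq, hd⟩

lemma induce_iUnion_connected {W : Type*} {H : SimpleGraph W} (hH : H.Connected)
    {S : W → Set V} (hS : ∀ w, (G.induce (S w)).Connected)
    (hadj : ∀ w w', H.Adj w w' → (S w ∩ S w').Nonempty) :
    (G.induce (⋃ w, S w)).Connected := by
  have hsub : ∀ w, S w ⊆ ⋃ w, S w := Set.subset_iUnion S
  have key : ∀ {w w'} (_ : H.Walk w w') {x y} (hx : x ∈ S w) (hy : y ∈ S w'),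
      (G.induce (⋃ w, S w)).Reachable ⟨x, hsub w hx⟩ ⟨y, hsub w' hy⟩ := by
    intro w w' p
    induction p with
    | nil =>
      intro x y hx hy
      exact ((hS _).preconnected ⟨x, hx⟩ ⟨y, hy⟩).map (G.induceHomOfLE (hsub _)).toHom
    | @cons w w₁ w' h p ih =>
      intro x y hx hy
      obtain ⟨z, hzw, hzw₁⟩ := hadj w w₁ h
      exact (((hS w).preconnected ⟨x, hx⟩ ⟨z, hzw⟩).map
        (G.induceHomOfLE (hsub w)).toHom).trans (ih hzw₁ hy)
  obtain ⟨w₀⟩ := hH.nonempty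
  obtain ⟨⟨x₀, hx₀⟩⟩ := (hS w₀).nonempty
  rw [connected_iff_exists_forall_reachable]
  refine ⟨⟨x₀, hsub w₀ hx₀⟩, fun ⟨y, hy⟩ => ?_⟩
  obtain ⟨w, hyw⟩ := Set.mem_iUnion.mp hy
  exact key (hH.preconnected w₀ w).some hx₀ hyw

lemma exists_isPath_of_connected_induce {S : Set V} (hS : (G.induce S).Connected) {x y : V}
    (hx : x ∈ S) (hy : y ∈ S) : ∃ p : G.Walk x y, p.IsPath :=
  ((hS.preconnected ⟨x, hx⟩ ⟨y, hy⟩).map (Embedding.induce S).toHom).exists_isPath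

namespace IsAcyclic

variable {S S₁ S₂ S₃ : Set V}

lemma support_subset_of_isPath (hG : G.IsAcyclic) (hS : (G.induce S).Connected) {x y : V}
    {p : G.Walk x y} (hp : p.IsPath) (hx : x ∈ S) (hy : y ∈ S) : ∀ v ∈ p.support, v ∈ S := by
  classical
  obtain ⟨w⟩ := hS.preconnected ⟨x, hx⟩ ⟨y, hy⟩
  let w' := w.map (Embedding.induce S).toHom
  obtain rfl : p = w'.bypass :=
    congrArg Subtype.val
      ((hG.subsingleton_path x y).elim ⟨p, hp⟩ ⟨w'.bypass, w'.bypass_isPath⟩)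
  intro v hv
  have hv' : v ∈ w'.support := w'.support_bypass_subset_support hv
  rw [Walk.support_map] at hv'
  obtain ⟨⟨u, hu⟩, -, rfl⟩ := List.mem_map.mp hv'
  exact hu

lemma exists_mem_support_of_isPath (hG : G.IsAcyclic) {a b c : V} {p : G.Walk a b} {q : G.Walk b c}
    {r : G.Walk a c} (hp : p.IsPath) (hq : q.IsPath) (hr : r.IsPath) :
    ∃ m ∈ p.support, m ∈ q.support ∧ m ∈ r.support := by
  classical
  -- With `m` the first vertex of `p` on `q`, the path `p` up to `m` followed by `q` from `m`
  -- goes from `a` to `c`, so it is `r`.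
  obtain ⟨m, hmq, hmp, hfirst⟩ :=
    p.exists_mem_support_forall_mem_support_imp_eq q.support.toFinset ⟨b, by simp⟩
  rw [List.mem_toFinset] at hmq
  have hpath : ((p.takeUntil m hmp).append (q.dropUntil m hmq)).IsPath :=
    (hp.takeUntil hmp).append_of_support_inter (hq.dropUntil hmq) fun x hx hxq =>
      hfirst x (List.mem_toFinset.mpr (q.support_dropUntil_subset_support hmq hxq)) hx
  obtain rfl : r = _ :=
    congrArg Subtype.val ((hG.subsingleton_path a c).elim ⟨r, hr⟩ ⟨_, hpath⟩)
  exact ⟨m, p.support_takeUntil_subset_support hmp (Walk.end_mem_support _), hmq,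
    by simp [Walk.support_append]⟩

lemma helly_three (hG : G.IsAcyclic) (h₁ : (G.induce S₁).Connected) (h₂ : (G.induce S₂).Connected)
    (h₃ : (G.induce S₃).Connected) (h₁₂ : (S₁ ∩ S₂).Nonempty) (h₁₃ : (S₁ ∩ S₃).Nonempty)
    (h₂₃ : (S₂ ∩ S₃).Nonempty) : (S₁ ∩ S₂ ∩ S₃).Nonempty := by
  obtain ⟨a, ha₂, ha₃⟩ := h₂₃
  obtain ⟨b, hb₁, hb₃⟩ := h₁₃
  obtain ⟨c, hc₁, hc₂⟩ := h₁₂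
  obtain ⟨p, hp⟩ := exists_isPath_of_connected_induce h₃ ha₃ hb₃
  obtain ⟨q, hq⟩ := exists_isPath_of_connected_induce h₁ hb₁ hc₁
  obtain ⟨r, hr⟩ := exists_isPath_of_connected_induce h₂ ha₂ hc₂
  obtain ⟨m, hmp, hmq, hmr⟩ := hG.exists_mem_support_of_isPath hp hq hr
  exact ⟨m, ⟨hG.support_subset_of_isPath h₁ hq hb₁ hc₁ m hmq,
    hG.support_subset_of_isPath h₂ hr ha₂ hc₂ m hmr⟩,
    hG.support_subset_of_isPath h₃ hp ha₃ hb₃ m hmp⟩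

lemma induce_inter_connected (hG : G.IsAcyclic) (h₁ : (G.induce S₁).Connected)
    (h₂ : (G.induce S₂).Connected) (h₁₂ : (S₁ ∩ S₂).Nonempty) : (G.induce (S₁ ∩ S₂)).Connected := by
  rw [connected_iff]
  refine ⟨?_, h₁₂.to_subtype⟩
  rintro ⟨x, hx₁, hx₂⟩ ⟨y, hy₁, hy₂⟩
  obtain ⟨p, hp⟩ := exists_isPath_of_connected_induce h₁ hx₁ hy₁
  exact (p.induce (S₁ ∩ S₂) fun v hv => ⟨hG.support_subset_of_isPath h₁ hp hx₁ hy₁ v hv,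
    hG.support_subset_of_isPath h₂ hp hx₂ hy₂ v hv⟩).reachable

lemma helly_four (hG : G.IsAcyclic) {S : Fin 4 → Set V} (hS : ∀ i, (G.induce (S i)).Connected)
    (hS' : ∀ i j, i ≠ j → (S i ∩ S j).Nonempty) : ∃ x, ∀ i, x ∈ S i := by
  have h₀₁ := hS' 0 1 (by decide)
  obtain ⟨x, ⟨⟨hx₀, hx₁⟩, hx₂⟩, hx₃⟩ :=
    hG.helly_three (hG.induce_inter_connected (hS 0) (hS 1) h₀₁) (hS 2) (hS 3)
    (hG.helly_three (hS 0) (hS 1) (hS 2) h₀₁ (hS' 0 2 (by decide)) (hS' 1 2 (by decide)))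
    (hG.helly_three (hS 0) (hS 1) (hS 3) h₀₁ (hS' 0 3 (by decide)) (hS' 1 3 (by decide)))
    (hS' 2 3 (by decide))
  refine ⟨x, fun i => ?_⟩
  fin_cases i <;> assumption

end IsAcyclic

end SimpleGraph

namespace TreeDecomp

def single {V : Type} [Fintype V] (G : SimpleGraph V) : TreeDecomp G where
  ι := Unit
  tree := ⊥
  isTree := .of_subsingleton
  bag _ := Finset.univ
  cover_vertex v := ⟨(), Finset.mem_univ v⟩
  cover_edge u v _ := ⟨(), Finset.mem_univ u, Finset.mem_univ v⟩
  bag_connected v :=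
    have : Nonempty {_i : Unit | v ∈ (Finset.univ : Finset V)} := ⟨⟨(), Finset.mem_univ v⟩⟩
    IsTree.of_subsingleton.connected

variable {V : Type} {G : SimpleGraph V}

lemma induce_iUnion_bag_connected (td : TreeDecomp G) {X : Set V}
    (hX : (G.induce X).Connected) :
    (td.tree.induce (⋃ v : X, {i | ↑v ∈ td.bag i})).Connected :=
  induce_iUnion_connected hX (fun v => td.bag_connected v) fun _ _ huv => by
    obtain ⟨i, hui, hvi⟩ := td.cover_edge huv
    exact ⟨i, hui, hvi⟩

lemma three_le_width (td : TreeDecomp G) (h : IsMinor (⊤ : SimpleGraph (Fin 4)) G) :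
    3 ≤ td.width := by
  classical
  obtain ⟨φ, -, hconn, hdisj, hadj⟩ := h
  obtain ⟨i, hi⟩ := td.isTree.isAcyclic.helly_four
    (fun w => td.induce_iUnion_bag_connected (hconn w)) fun w w' hww' => by
      obtain ⟨u, hu, v, hv, huv⟩ := hadj w w' hww'
      obtain ⟨i, hui, hvi⟩ := td.cover_edge huv
      exact ⟨i, Set.mem_iUnion.mpr ⟨⟨u, hu⟩, hui⟩, Set.mem_iUnion.mpr ⟨⟨v, hv⟩, hvi⟩⟩
  choose g hg using fun w => Set.mem_iUnion.mp (hi w)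
  have hinj : Set.InjOn (fun w => (g w : V)) (Finset.univ : Finset (Fin 4)) := by
    intro w _ w' _ hww'
    by_contra hne
    exact Set.disjoint_left.mp (hdisj w w' hne) (g w).2
      (by rw [show (g w : V) = g w' from hww']; exact (g w').2)
  have hcard : 4 ≤ (td.bag i).card := by
    simpa using Finset.card_le_card_of_injOn _ (fun w _ => hg w) hinj
  let := td.fin
  have := Finset.le_sup (f := fun i => (td.bag i).card) (Finset.mem_univ i)
  unfold width
  omega

end TreeDecomp

-- `treewidth` is an `sInf`, which is `0` on the empty set: `single` makes the range nonempty.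
lemma three_le_treewidth {V : Type} [Fintype V] {G : SimpleGraph V}
    (h : IsMinor (⊤ : SimpleGraph (Fin 4)) G) : 3 ≤ treewidth G :=
  le_csInf ⟨_, TreeDecomp.single G, rfl⟩ fun _ ⟨td, htd⟩ => htd ▸ td.three_le_width h

lemma isMinor_top_of_lt {W V : Type} [LinearOrder W] {G : SimpleGraph V} (X : W → Set V)
    (hconn : ∀ w, (G.induce (X w)).Connected)
    (hdisj : ∀ w w', w < w' → Disjoint (X w) (X w'))
    (hadj : ∀ w w', w < w' → ∃ u ∈ X w, ∃ v ∈ X w', G.Adj u v) :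
    IsMinor (⊤ : SimpleGraph W) G := by
  refine ⟨X, fun w => ?_, hconn, fun w w' hne => ?_, fun w w' hww' => ?_⟩
  · obtain ⟨⟨x, hx⟩⟩ := (hconn w).nonempty
    exact ⟨x, hx⟩
  · rcases hne.lt_or_gt with h | h
    · exact hdisj w w' h
    · exact (hdisj w' w h).symm
  · rcases (top_adj w w').mp hww' |>.lt_or_gt with h | h
    · exact hadj w w' h
    · obtain ⟨u, hu, v, hv, huv⟩ := hadj w' w h
      exact ⟨v, hv, u, hu, huv.symm⟩

namespace ContainsLadder

variable {V : Type} {G : SimpleGraph V} {k : ℕ} (L : ContainsLadder G k)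

lemma adj_iff (p q : Fin 2 × Fin (k + 1)) :
    G.Adj (L.f p) (L.f q) ↔
      p.1 = q.1 ∧ (p.2.val + 1 = q.2.val ∨ q.2.val + 1 = p.2.val) ∨ p.2 = q.2 ∧ p.1 ≠ q.1 := by
  rw [L.induced, ladder, SimpleGraph.fromRel_adj]
  obtain ⟨a, i⟩ := p
  obtain ⟨b, j⟩ := q
  simp only [ne_eq, Prod.mk.injEq, Fin.ext_iff]
  omega

lemma exists_walk_avoiding_of_not_squareCut {i : Fin k} {l : Fin (k + 1)}
    (hl : l.val + 1 = i.val) (hcut : ¬ L.SquareCut i) :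
    ∃ (b : Fin 2) (d : V) (q : G.Walk (L.f (0, i.succ)) d),
      (∀ v ∈ q.support, v ∉ L.f '' {p | p.2 = l ∨ p.2 = i.castSucc}) ∧
        G.Adj (L.f (b, l)) d := by
  set m := i.castSucc
  set r := i.succ
  set G' := G.deleteEdges {s(L.f (0, m), L.f (0, r)), s(L.f (1, m), L.f (1, r))}
  have hG' : G'.Connected := not_not.mp hcut
  set T : Set V := L.f '' {p | p.2 = l ∨ p.2 = m}
  have hT : ∀ {p}, L.f p ∈ T ↔ p.2 = l ∨ p.2 = m := L.inj.mem_set_image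
  -- Without the horizontal edges of square `i`, the middle vertices only see `T`, so a walk
  -- from column `r` to column `l` first enters `T` in column `l`.
  have hclosed : ∀ a v, G'.Adj (L.f (a, m)) v → v ∈ T := by
    intro a v hv
    rw [deleteEdges_adj] at hv
    obtain ⟨⟨b, j⟩, rfl⟩ := L.attach (a, m) (by simp [m]; omega) (by simp [m]; omega) v hv.1
    rw [hT]
    rcases (L.adj_iff _ _).mp hv.1 with ⟨hab, hj | hj⟩ | ⟨hj, -⟩
    · obtain rfl : j = r := Fin.ext (by simp [m, r] at hj ⊢; omega)
      subst hab
      exact absurd (by fin_cases a <;> simp) hv.2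
    · exact Or.inl (Fin.ext (by simp [m] at hj ⊢; omega))
    · exact Or.inr hj.symm
  have hr : L.f (0, r) ∉ T := by rw [hT]; simp [m, r, Fin.ext_iff]; omega
  obtain ⟨d, q, hqT, _, ⟨⟨b, j⟩, hj, rfl⟩, hdc⟩ :=
    (hG'.preconnected _ _).some.exists_adj_of_notMem_of_mem hr (hT (p := (0, l)) |>.mpr (.inl rfl))
  obtain rfl : j = l :=
    hj.resolve_right fun hjm => hqT d q.end_mem_support (hclosed b d (hjm ▸ hdc.symm))
  refine ⟨b, d, q.mapLe (deleteEdges_le _), ?_, (deleteEdges_le _ hdc).symm⟩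
  rwa [Walk.support_mapLe_eq_support]

theorem isMinor_top_of_not_squareCut {i : Fin k} {l : Fin (k + 1)} (hl : l.val + 1 = i.val)
    (hcut : ¬ L.SquareCut i) : IsMinor (⊤ : SimpleGraph (Fin 4)) G := by
  obtain ⟨b, d, q, hqT, hbd⟩ := L.exists_walk_avoiding_of_not_squareCut hl hcut
  set T : Set V := L.f '' {p | p.2 = l ∨ p.2 = i.castSucc}
  have hT : ∀ {p}, L.f p ∈ T ↔ p.2 = l ∨ p.2 = i.castSucc := L.inj.mem_set_image
  set Q : Set V := {v | v ∈ q.support}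
  have hQ : (G.induce ({L.f (1, i.succ)} ∪ Q)).Connected :=
    connected_induce_union (by simp) q.connected_induce_support.preconnected rfl
      q.start_mem_support ((L.adj_iff _ _).mpr (by simp))
  have hQT : Disjoint ({L.f (1, i.succ)} ∪ Q) T := by
    refine Set.disjoint_union_left.mpr ⟨Set.disjoint_singleton_left.mpr ?_,
      Set.disjoint_left.mpr hqT⟩
    rw [hT]; simp [Fin.ext_iff]; omega
  refine isMinor_top_of_lt ![{L.f (0, i.castSucc)}, {L.f (1, i.castSucc)}, {L.f (0, l), L.f (1, l)},
    {L.f (1, i.succ)} ∪ Q] ?_ ?_ ?_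
  · intro w
    fin_cases w
    · simp
    · simp
    · exact induce_pair_connected_of_adj ((L.adj_iff _ _).mpr (by simp))
    · exact hQ
  · intro w w' h
    fin_cases w <;> fin_cases w' <;> try exact absurd h (by decide)
    · exact Set.disjoint_singleton.mpr (L.inj.ne (by simp))
    · exact Set.disjoint_singleton_left.mpr (by simp [L.inj.eq_iff, Fin.ext_iff]; omega)
    · exact hQT.symm.mono_left (Set.singleton_subset_iff.mpr (hT.mpr (.inr rfl)))
    · exact Set.disjoint_singleton_left.mpr (by simp [L.inj.eq_iff, Fin.ext_iff]; omega)
    · exact hQT.symm.mono_left (Set.singleton_subset_iff.mpr (hT.mpr (.inr rfl)))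
    · exact hQT.symm.mono_left (Set.pair_subset (hT.mpr (.inl rfl)) (hT.mpr (.inl rfl)))
  · intro w w' h
    fin_cases w <;> fin_cases w' <;> try exact absurd h (by decide)
    · exact ⟨_, rfl, _, rfl, (L.adj_iff _ _).mpr (by simp)⟩
    · exact ⟨_, rfl, _, .inl rfl, (L.adj_iff _ _).mpr (by simp; omega)⟩
    · exact ⟨_, rfl, _, .inr q.start_mem_support, (L.adj_iff _ _).mpr (by simp)⟩
    · exact ⟨_, rfl, _, .inr rfl, (L.adj_iff _ _).mpr (by simp; omega)⟩
    · exact ⟨_, rfl, _, .inl rfl, (L.adj_iff _ _).mpr (by simp)⟩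
    · exact ⟨_, by fin_cases b <;> simp, d, .inr q.end_mem_support, hbd⟩

end ContainsLadder

theorem stmt0_general {V : Type} [Fintype V] (G : SimpleGraph V)
    {k : ℕ} (hk : 2 ≤ k) (L : ContainsLadder G k) (hL : ¬ L.Disconnects) :
    IsMinor (⊤ : SimpleGraph (Fin 4)) G ∧ 3 ≤ treewidth G := by
  have hK₄ := L.isMinor_top_of_not_squareCut (i := ⟨1, by omega⟩) (l := 0) rfl
    fun hcut => hL ⟨_, hcut⟩
  exact ⟨hK₄, three_le_treewidth hK₄⟩

theorem stmt0 {V : Type} [Fintype V] (G : SimpleGraph V) (hG : G.Connected)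
    {k : ℕ} (hk : 2 ≤ k) (L : ContainsLadder G k) (hL : ¬ L.Disconnects) :
    IsMinor (⊤ : SimpleGraph (Fin 4)) G ∧ 3 ≤ treewidth G :=
  stmt0_general G hk L hL
end

section
/- Let G contain a ladder L. Then one square of L has the property that its two horizontal edges form an edge cut of G if and only if every square of L has this property. -/
open SimpleGraph

namespace LadderAux

variable {V : Type} {G : SimpleGraph V} {k : ℕ}

def delset (L : ContainsLadder G k) (i : Fin k) : Set (Sym2 V) :=
  {s(L.f (0, i.castSucc), L.f (0, i.succ)), s(L.f (1, i.castSucc), L.f (1, i.succ))}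

def Gd (L : ContainsLadder G k) (i : Fin k) : SimpleGraph V := G.deleteEdges (delset L i)

lemma squareCut_def (L : ContainsLadder G k) (i : Fin k) :
    L.SquareCut i ↔ ¬ (Gd L i).Connected := Iff.rfl

lemma Gd_adj_iff (L : ContainsLadder G k) (i : Fin k) {u v : V} :
    (Gd L i).Adj u v ↔ G.Adj u v ∧ s(u, v) ∉ delset L i :=
  SimpleGraph.deleteEdges_adj

lemma adj_horiz (L : ContainsLadder G k) (a : Fin 2) {c c' : Fin (k+1)}
    (h : c.val + 1 = c'.val) : G.Adj (L.f (a, c)) (L.f (a, c')) := by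
  rw [L.induced, ladder, SimpleGraph.fromRel_adj]
  refine ⟨?_, Or.inl (Or.inl ⟨rfl, h⟩)⟩
  intro heq
  have hcc : c = c' := congrArg Prod.snd heq
  rw [Fin.ext_iff] at hcc
  omega

lemma adj_rung (L : ContainsLadder G k) {a b : Fin 2} (hab : a ≠ b) (c : Fin (k+1)) :
    G.Adj (L.f (a, c)) (L.f (b, c)) := by
  rw [L.induced, ladder, SimpleGraph.fromRel_adj]
  refine ⟨?_, Or.inl (Or.inr ⟨rfl, hab⟩)⟩
  intro heq
  exact hab (congrArg Prod.fst heq)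

lemma adj_structure (L : ContainsLadder G k) {a b : Fin 2} {c d : Fin (k+1)}
    (h : G.Adj (L.f (a, c)) (L.f (b, d))) :
    (a = b ∧ (c.val + 1 = d.val ∨ d.val + 1 = c.val)) ∨ (c = d ∧ a ≠ b) := by
  rw [L.induced, ladder, SimpleGraph.fromRel_adj] at h
  obtain ⟨hne, h | h⟩ := h
  · rcases h with ⟨h1, h2⟩ | ⟨h1, h2⟩
    · exact Or.inl ⟨h1, Or.inl h2⟩
    · exact Or.inr ⟨h1, h2⟩
  · rcases h with ⟨h1, h2⟩ | ⟨h1, h2⟩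
    · exact Or.inl ⟨h1.symm, Or.inr h2⟩
    · exact Or.inr ⟨h1.symm, fun hh => h2 hh.symm⟩

lemma horiz_not_mem (L : ContainsLadder G k) (i : Fin k) (a : Fin 2) {c c' : Fin (k+1)}
    (hcc : c.val + 1 = c'.val) (hne : c.val ≠ i.val) :
    s(L.f (a, c), L.f (a, c')) ∉ delset L i := by
  intro hmem
  simp only [delset, Set.mem_insert_iff, Set.mem_singleton_iff] at hmem
  rcases hmem with h | h <;>
  · rw [Sym2.eq_iff] at h
    rcases h with ⟨h1, h2⟩ | ⟨h1, h2⟩ <;>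
    · have e1 := L.inj h1
      have e2 := L.inj h2
      simp only [Prod.mk.injEq, Fin.ext_iff, Fin.coe_castSucc, Fin.val_succ] at e1 e2
      omega

lemma rung_not_mem (L : ContainsLadder G k) (i : Fin k) (c : Fin (k+1)) :
    s(L.f (0, c), L.f (1, c)) ∉ delset L i := by
  intro hmem
  simp only [delset, Set.mem_insert_iff, Set.mem_singleton_iff] at hmem
  rcases hmem with h | h <;>
  · rw [Sym2.eq_iff] at h
    rcases h with ⟨h1, h2⟩ | ⟨h1, h2⟩ <;>
    · have e1 := L.inj h1
      have e2 := L.inj h2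
      simp only [Prod.mk.injEq, Fin.ext_iff, Fin.coe_castSucc, Fin.val_succ,
        Fin.val_zero, Fin.val_one] at e1 e2
      omega

lemma Gd_adj (L : ContainsLadder G k) (i : Fin k) {u v : V} (h : G.Adj u v)
    (hne : s(u, v) ∉ delset L i) : (Gd L i).Adj u v :=
  (Gd_adj_iff L i).mpr ⟨h, hne⟩

lemma reachL (L : ContainsLadder G k) (i : Fin k) :
    ∀ (n : ℕ) (hn : n < k + 1), n ≤ i.val → ∀ a : Fin 2,
      (Gd L i).Reachable (L.f (0, 0)) (L.f (a, ⟨n, hn⟩)) := by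
  intro n
  induction n with
  | zero =>
    intro hn _ a
    have h0 : (⟨0, hn⟩ : Fin (k+1)) = 0 := by
      apply Fin.ext; simp
    rw [h0]
    fin_cases a
    · exact SimpleGraph.Reachable.refl _
    · exact (Gd_adj L i (adj_rung L (by decide) 0) (rung_not_mem L i 0)).reachable
  | succ n ih =>
    intro hn h a
    have hn' : n < k + 1 := by omega
    refine (ih hn' (by omega) a).trans ?_
    exact (Gd_adj L i (adj_horiz L a (c := ⟨n, hn'⟩) (c' := ⟨n+1, hn⟩) rfl)
      (horiz_not_mem L i a rfl (by simp; omega))).reachable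

lemma reachR (L : ContainsLadder G k) (i : Fin k) :
    ∀ (m : ℕ), m + i.val + 1 ≤ k → ∀ a : Fin 2,
      (Gd L i).Reachable (L.f (0, Fin.last k))
        (L.f (a, ⟨k - m, Nat.lt_succ_of_le (Nat.sub_le k m)⟩)) := by
  intro m
  induction m with
  | zero =>
    intro hm a
    have h0 : (⟨k - 0, Nat.lt_succ_of_le (Nat.sub_le k 0)⟩ : Fin (k+1)) = Fin.last k := by
      apply Fin.ext; simp
    rw [h0]
    fin_cases a
    · exact SimpleGraph.Reachable.refl _
    · exact (Gd_adj L i (adj_rung L (by decide) (Fin.last k)) (rung_not_mem L i _)).reachable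
  | succ m ih =>
    intro hm a
    have h1 := ih (by omega) a
    have hadj : G.Adj (L.f (a, ⟨k - (m+1), Nat.lt_succ_of_le (Nat.sub_le k (m+1))⟩))
        (L.f (a, ⟨k - m, Nat.lt_succ_of_le (Nat.sub_le k m)⟩)) :=
      adj_horiz L a (by simp; omega)
    exact h1.trans (Gd_adj L i hadj (horiz_not_mem L i a (by simp; omega)
      (by simp; omega))).symm.reachable

lemma reach_left (L : ContainsLadder G k) (i : Fin k) {c : Fin (k+1)}
    (hc : c.val ≤ i.val) (a : Fin 2) :
    (Gd L i).Reachable (L.f (0, 0)) (L.f (a, c)) :=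
  reachL L i c.val c.isLt hc a

lemma reach_right (L : ContainsLadder G k) (i : Fin k) {c : Fin (k+1)}
    (hc : i.val + 1 ≤ c.val) (a : Fin 2) :
    (Gd L i).Reachable (L.f (0, Fin.last k)) (L.f (a, c)) := by
  have hck : c.val ≤ k := by omega
  have h := reachR L i (k - c.val) (by omega) a
  have he : (⟨k - (k - c.val), Nat.lt_succ_of_le (Nat.sub_le k (k - c.val))⟩ : Fin (k+1)) = c :=
    Fin.ext (by simp; omega)
  rwa [he] at h

lemma connected_of_reach (L : ContainsLadder G k) (hG : G.Connected) (i : Fin k)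
    (h : (Gd L i).Reachable (L.f (0, 0)) (L.f (0, Fin.last k))) : (Gd L i).Connected := by
  have hr2 : ∀ a : Fin 2, (Gd L i).Reachable (L.f (a, i.castSucc)) (L.f (a, i.succ)) := by
    intro a
    exact ((reach_left L i (by simp) a).symm.trans h).trans
      (reach_right L i (by simp) a)
  have key : ∀ u w : V, G.Walk u w → (Gd L i).Reachable u w := by
    intro u w p
    induction p with
    | nil => exact SimpleGraph.Reachable.refl _
    | @cons x y z hadj p ih =>
      by_cases hmem : s(x, y) ∈ delset L i
      · refine SimpleGraph.Reachable.trans ?_ ih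
        simp only [delset, Set.mem_insert_iff, Set.mem_singleton_iff] at hmem
        rcases hmem with hm | hm <;> rw [Sym2.eq_iff] at hm <;>
          rcases hm with ⟨h1, h2⟩ | ⟨h1, h2⟩ <;> rw [h1, h2]
        · exact hr2 0
        · exact (hr2 0).symm
        · exact hr2 1
        · exact (hr2 1).symm
      · exact ((Gd_adj L i hadj hmem).reachable).trans ih
  have hK : ∀ v : V, (Gd L i).Reachable v (L.f (0, 0)) := by
    intro v
    obtain ⟨p⟩ := hG.preconnected v (L.f (0, 0))
    exact key _ _ p
  exact (SimpleGraph.connected_iff_exists_forall_reachable _).mpr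
    ⟨L.f (0, 0), fun w => (hK w).symm⟩

def Hgr (L : ContainsLadder G k) : SimpleGraph V :=
  SimpleGraph.fromRel fun u v => G.Adj u v ∧ (u ∉ Set.range L.f ∨ v ∉ Set.range L.f)

lemma Hgr_adj_of (L : ContainsLadder G k) {u v : V} (h : G.Adj u v)
    (ho : u ∉ Set.range L.f ∨ v ∉ Set.range L.f) : (Hgr L).Adj u v := by
  rw [Hgr, SimpleGraph.fromRel_adj]
  exact ⟨h.ne, Or.inl ⟨h, ho⟩⟩

lemma not_mem_del_outside (L : ContainsLadder G k) (i : Fin k) {u v : V}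
    (ho : u ∉ Set.range L.f ∨ v ∉ Set.range L.f) : s(u, v) ∉ delset L i := by
  intro hmem
  simp only [delset, Set.mem_insert_iff, Set.mem_singleton_iff] at hmem
  rcases hmem with h | h <;> rw [Sym2.eq_iff] at h <;>
    rcases h with ⟨h1, h2⟩ | ⟨h1, h2⟩ <;> rcases ho with ho | ho <;>
    first
      | exact ho ⟨_, h1.symm⟩
      | exact ho ⟨_, h2.symm⟩

lemma Hgr_le_Gd (L : ContainsLadder G k) (i : Fin k) : Hgr L ≤ Gd L i := by
  intro u v h
  rw [Hgr, SimpleGraph.fromRel_adj] at h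
  obtain ⟨hne, h | h⟩ := h
  · exact Gd_adj L i h.1 (not_mem_del_outside L i h.2)
  · exact (Gd_adj L i h.1 (not_mem_del_outside L i h.2)).symm

lemma corner (L : ContainsLadder G k) {a : Fin 2} {c : Fin (k+1)} {v : V}
    (hadj : G.Adj (L.f (a, c)) v) (hv : v ∉ Set.range L.f) : c.val = 0 ∨ c.val = k := by
  by_contra hcc
  push_neg at hcc
  exact hv (L.attach (a, c) hcc.1 hcc.2 v hadj)

lemma extract (L : ContainsLadder G k) (j : Fin k) : ∀ {u w : V}, (Gd L j).Walk u w →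
    (∃ (b : Fin 2) (c : Fin (k+1)), j.val + 1 ≤ c.val ∧ w = L.f (b, c)) →
    (∃ (b : Fin 2) (c : Fin (k+1)), j.val + 1 ≤ c.val ∧ u = L.f (b, c)) ∨
    (u ∉ Set.range L.f ∧ ∃ b : Fin 2, (Hgr L).Reachable u (L.f (b, Fin.last k))) ∨
    (∃ a b : Fin 2, (Hgr L).Reachable (L.f (a, 0)) (L.f (b, Fin.last k))) := by
  intro u w p
  induction p with
  | nil => exact fun hw => Or.inl hw
  | @cons u x w hadj q ih =>
    intro hw
    obtain ⟨hG1, hnd⟩ := (Gd_adj_iff L j).mp hadj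
    rcases ih hw with hx | ⟨hxo, b, hxr⟩ | hc
    · -- x is a right ladder vertex
      obtain ⟨b, c, hc1, rfl⟩ := hx
      by_cases hu : u ∈ Set.range L.f
      · obtain ⟨⟨a, c'⟩, rfl⟩ := hu
        by_cases hcu : j.val + 1 ≤ c'.val
        · exact Or.inl ⟨a, c', hcu, rfl⟩
        · push_neg at hcu
          exfalso
          rcases adj_structure L hG1 with ⟨hab, hcol | hcol⟩ | ⟨hceq, _⟩
          · -- c' + 1 = c : this is the deleted horizontal edge of square j
            apply hnd
            have hc'j : c' = j.castSucc := Fin.ext (by simp; omega)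
            have hcj : c = j.succ := Fin.ext (by simp [Fin.val_succ]; omega)
            subst hab hc'j hcj
            fin_cases a
            · exact Or.inl rfl
            · exact Or.inr rfl
          · omega
          · rw [Fin.ext_iff] at hceq; omega
      · -- u outside the ladder
        have hcor := corner L hG1.symm hu
        have hck : c = Fin.last k := by
          apply Fin.ext
          simp only [Fin.val_last]
          omega
        subst hck
        exact Or.inr (Or.inl ⟨hu, b, (Hgr_adj_of L hG1 (Or.inl hu)).reachable⟩)
    · -- x is outside, reaches a right corner within Hgr
      by_cases hu : u ∈ Set.range L.f
      · obtain ⟨⟨a, c⟩, rfl⟩ := hu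
        rcases corner L hG1 hxo with h0 | hk0
        · have hc0 : c = 0 := Fin.ext (by simpa using h0)
          subst hc0
          exact Or.inr (Or.inr ⟨a, b, (Hgr_adj_of L hG1 (Or.inr hxo)).reachable.trans hxr⟩)
        · refine Or.inl ⟨a, c, ?_, rfl⟩
          have := j.isLt
          omega
      · exact Or.inr (Or.inl ⟨hu, b, (Hgr_adj_of L hG1 (Or.inl hu)).reachable.trans hxr⟩)
    · exact Or.inr (Or.inr hc)

lemma cross_transfer (L : ContainsLadder G k) (i j : Fin k)
    (h : (Gd L j).Reachable (L.f (0, 0)) (L.f (0, Fin.last k))) :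
    (Gd L i).Reachable (L.f (0, 0)) (L.f (0, Fin.last k)) := by
  obtain ⟨p⟩ := h
  have hw : ∃ (b : Fin 2) (c : Fin (k+1)), j.val + 1 ≤ c.val ∧ L.f (0, Fin.last k) = L.f (b, c) :=
    ⟨0, Fin.last k, by have := j.isLt; simp only [Fin.val_last]; omega, rfl⟩
  rcases extract L j p hw with h1 | h2 | h3
  · exfalso
    obtain ⟨b, c, hc, heq⟩ := h1
    have he := L.inj heq
    have : (0 : Fin (k+1)) = c := congrArg Prod.snd he
    rw [Fin.ext_iff] at this
    simp at this
    omega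
  · exact absurd ⟨(0, 0), rfl⟩ h2.1
  · obtain ⟨a, b, hr⟩ := h3
    have hr' := hr.mono (Hgr_le_Gd L i)
    have s1 : (Gd L i).Reachable (L.f (0, 0)) (L.f (a, 0)) := by
      fin_cases a
      · exact SimpleGraph.Reachable.refl _
      · exact (Gd_adj L i (adj_rung L (by decide) 0) (rung_not_mem L i 0)).reachable
    have s2 : (Gd L i).Reachable (L.f (b, Fin.last k)) (L.f (0, Fin.last k)) := by
      fin_cases b
      · exact SimpleGraph.Reachable.refl _
      · exact (Gd_adj L i (adj_rung L (by decide) (Fin.last k))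
          (rung_not_mem L i _)).reachable.symm
    exact s1.trans (hr'.trans s2)

end LadderAux

theorem stmt1 {V : Type} (G : SimpleGraph V) (hG : G.Connected)
    {k : ℕ} (hk : 1 ≤ k) (L : ContainsLadder G k) :
    (∃ i : Fin k, L.SquareCut i) ↔ (∀ i : Fin k, L.SquareCut i) := by
  constructor
  · rintro ⟨i, hi⟩ j
    rw [LadderAux.squareCut_def] at hi ⊢
    intro hconn
    exact hi (LadderAux.connected_of_reach L hG i
      (LadderAux.cross_transfer L i j (hconn.preconnected _ _)))
  · intro h
    exact ⟨⟨0, hk⟩, h ⟨0, hk⟩⟩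
end

section
/- Let G be a graph with a tree decomposition of width w, and suppose some bag B contains all four vertices {u,v,w,x} of a square of a ladder L contained in G. Then the graph G' obtained by inserting a new rung into the ladder (adding two new adjacent vertices u', v' with u' adjacent to u and w, v' adjacent to v and x, deleting edges {u,w} and {v,x}) has a tree decomposition of width max(w, 4). In particular if w ≥ 4 then tw(G') ≤ tw(G). -/
open SimpleGraph

/-!
Hang a new leaf with bag `{u', u, v, w, x}` off the bag `B ⊇ {u, v, w, x}`, and off that leaf a
second one with bag `{u', v', v, w, x}`. The new edges `uu'`, `u'w`, `vv'`, `v'x`, `u'v'` all lie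
in one of the two new bags, and each vertex of a new bag that already occurs higher up occurs in the
adjacent bag, so the subtree of every vertex stays connected. The new bags have five vertices.
-/

namespace SimpleGraph

variable {ι W : Type*}

def addLeaf (T : SimpleGraph ι) (r : ι) : SimpleGraph (ι ⊕ Unit) :=
  (T ⊕g ⊥) ⊔ edge (.inl r) (.inr ())

theorem addLeaf_adj_inl {T : SimpleGraph ι} {r a b : ι} (h : T.Adj a b) :
    (T.addLeaf r).Adj (.inl a) (.inl b) :=
  Or.inl h

theorem addLeaf_adj_leaf (T : SimpleGraph ι) (r : ι) :
    (T.addLeaf r).Adj (.inl r) (.inr ()) := by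
  simp [addLeaf, edge_adj]

theorem IsTree.addLeaf [Finite ι] {T : SimpleGraph ι} (hT : T.IsTree) (r : ι) :
    (T.addLeaf r).IsTree := by
  have := Fintype.ofFinite ι
  classical
  rw [isTree_iff_connected_and_card] at hT ⊢
  refine ⟨hT.1.sum_sup_edge ((connected_iff _).2 ⟨.of_subsingleton, inferInstance⟩), ?_⟩
  have hsum : Nat.card (T ⊕g (⊥ : SimpleGraph Unit)).edgeSet = Nat.card T.edgeSet := by
    rw [Nat.card_congr edgeSetSumEquiv, Nat.card_sum]
    simp
  have hleaf : Nat.card (T.addLeaf r).edgeSet =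
      Nat.card (T ⊕g (⊥ : SimpleGraph Unit)).edgeSet + 1 := by
    rw [Nat.card_eq_fintype_card, Nat.card_eq_fintype_card, ← edgeFinset_card,
      ← edgeFinset_card]
    convert card_edgeFinset_sup_edge (T ⊕g ⊥) (s := .inl r) (t := .inr ()) (by simp) (by simp)
    rfl
  rw [hleaf, hsum, hT.2, Nat.card_sum, Nat.card_unique (α := Unit)]

theorem Preconnected.induce_addLeaf_image_inl {T : SimpleGraph ι} {S : Set ι}
    (h : (T.induce S).Preconnected) (r : ι) :
    ((T.addLeaf r).induce (Sum.inl '' S)).Preconnected :=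
  h.map (induceHom ⟨Sum.inl, addLeaf_adj_inl⟩ (Set.mapsTo_image _ _))
    (by rintro ⟨_, a, ha, rfl⟩; exact ⟨⟨a, ha⟩, rfl⟩)

/- Subtrees are tracked as preconnected sets, so that a vertex lying in no bag yet (a new vertex
before its leaf is attached) needs no special treatment. -/
theorem addLeaf_induce_preconnected {T : SimpleGraph ι} {bag : ι → Finset W} {r : ι}
    {X : Finset W} (hbag : ∀ v, (T.induce {i | v ∈ bag i}).Preconnected)
    (hX : ∀ v ∈ X, ∀ i, v ∈ bag i → v ∈ bag r) (v : W) :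
    ((T.addLeaf r).induce {j | v ∈ Sum.elim bag (fun _ => X) j}).Preconnected := by
  have hold := (hbag v).induce_addLeaf_image_inl r
  by_cases hv : v ∈ X
  · have hset : {j | v ∈ Sum.elim bag (fun _ => X) j} =
        Sum.inl '' {i | v ∈ bag i} ∪ {.inr ()} := by
      ext (j | _) <;> simp [hv]
    rw [hset]
    rcases Set.eq_empty_or_nonempty {i | v ∈ bag i} with hS | ⟨i, hi⟩
    · rw [hS, Set.image_empty, Set.empty_union]
      exact .of_subsingleton
    · exact (connected_induce_union hold .of_subsingleton ⟨r, hX v hv i hi, rfl⟩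
        (Set.mem_singleton _) (addLeaf_adj_leaf T r)).preconnected
  · have hset :
        {j : ι ⊕ Unit | v ∈ Sum.elim bag (fun _ => X) j} = Sum.inl '' {i | v ∈ bag i} := by
      ext (j | _) <;> simp [hv]
    rwa [hset]

end SimpleGraph

namespace TreeDecomp

variable {V : Type} {G : SimpleGraph V}

theorem width_le_iff (td : TreeDecomp G) {w : ℕ} :
    td.width ≤ w ↔ ∀ j, (td.bag j).card ≤ w + 1 := by
  let := td.fin
  simp [width, Finset.sup_le_iff]

theorem treewidth_le_width (td : TreeDecomp G) : treewidth G ≤ td.width :=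
  Nat.sInf_le ⟨td, rfl⟩

theorem map_inl_bag_preconnected (td : TreeDecomp G) (W : Type) (v : V ⊕ W) :
    (td.tree.induce {j | v ∈ (td.bag j).map .inl}).Preconnected := by
  cases v with
  | inl y =>
    rw [show {j | .inl y ∈ (td.bag j).map .inl} = {j | y ∈ td.bag j} by
      ext; simp [Finset.mem_map]]
    exact (td.bag_connected y).preconnected
  | inr c =>
    rw [show {j | .inr c ∈ (td.bag j).map .inl} = ∅ by ext; simp [Finset.mem_map]]
    exact .of_subsingleton

end TreeDecomp

section InsertRung

variable {V : Type} {G : SimpleGraph V} {k : ℕ} (L : ContainsLadder G k) (i : Fin k)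

theorem insertRung_adj_inl_inl {a b : V} (h : (insertRung G L i).Adj (.inl a) (.inl b)) :
    G.Adj a b := by
  simp only [insertRung, fromRel_adj, Sum.inl.injEq, reduceCtorEq, and_false, false_and,
    exists_false, or_false] at h
  rcases h.2 with ⟨_, _, rfl, rfl, hab, -⟩ | ⟨_, _, rfl, rfl, hab, -⟩
  exacts [hab, hab.symm]

theorem insertRung_adj_inl_inr {a : V} {c : Fin 2}
    (h : (insertRung G L i).Adj (.inl a) (.inr c)) :
    a = L.f (c, i.castSucc) ∨ a = L.f (c, i.succ) := by
  simp only [insertRung, fromRel_adj, Sum.inl.injEq, Sum.inr.injEq, reduceCtorEq, exists_eq_right',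
    exists_and_left, exists_eq_left', false_and, exists_false, or_false, false_or, and_false] at h
  exact h.2

variable [DecidableEq V]

/- With `u, v, w, x` the corners `L.f (0, i.castSucc)`, `L.f (1, i.castSucc)`, `L.f (0, i.succ)`,
`L.f (1, i.succ)` of the square and `u' = inr 0`, `v' = inr 1`, these are `{u', u, v, w, x}` and
`{u', v', v, w, x}`. -/
def ContainsLadder.pendantBag₁ : Finset (V ⊕ Fin 2) :=
  {.inr 0, .inl (L.f (0, i.castSucc)), .inl (L.f (1, i.castSucc)), .inl (L.f (0, i.succ)),
    .inl (L.f (1, i.succ))}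

def ContainsLadder.pendantBag₂ : Finset (V ⊕ Fin 2) :=
  {.inr 0, .inr 1, .inl (L.f (1, i.castSucc)), .inl (L.f (0, i.succ)), .inl (L.f (1, i.succ))}

def insertRungBag (td : TreeDecomp G) : (td.ι ⊕ Unit) ⊕ Unit → Finset (V ⊕ Fin 2) :=
  Sum.elim (Sum.elim (fun j => (td.bag j).map .inl) fun _ => L.pendantBag₁ i)
    fun _ => L.pendantBag₂ i

theorem insertRungBag_cover_edge (td : TreeDecomp G) {p q : V ⊕ Fin 2}
    (h : (insertRung G L i).Adj p q) :
    ∃ j, p ∈ insertRungBag L i td j ∧ q ∈ insertRungBag L i td j := by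
  have new_edge : ∀ a c, (insertRung G L i).Adj (.inl a) (.inr c) →
      ∃ j, .inl a ∈ insertRungBag L i td j ∧ .inr c ∈ insertRungBag L i td j := by
    intro a c hac
    rcases insertRung_adj_inl_inr L i hac with rfl | rfl <;> fin_cases c
    · exact ⟨.inl (.inr ()), by simp [insertRungBag, ContainsLadder.pendantBag₁]⟩
    all_goals exact ⟨.inr (), by simp [insertRungBag, ContainsLadder.pendantBag₂]⟩
  rcases p with a | c <;> rcases q with b | d
  · obtain ⟨j, ha, hb⟩ := td.cover_edge (insertRung_adj_inl_inl L i h)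
    exact ⟨.inl (.inl j), by simpa [insertRungBag] using ha, by simpa [insertRungBag] using hb⟩
  · exact new_edge a d h
  · exact (new_edge b c h.symm).imp fun _ => And.symm
  · exact ⟨.inr (), by
      fin_cases c <;> fin_cases d <;> simp [insertRungBag, ContainsLadder.pendantBag₂]⟩

theorem insertRungBag_cover_vertex (td : TreeDecomp G) (v : V ⊕ Fin 2) :
    ∃ j, v ∈ insertRungBag L i td j := by
  rcases v with y | c
  · obtain ⟨j, hj⟩ := td.cover_vertex y
    exact ⟨.inl (.inl j), by simpa [insertRungBag, Finset.mem_map] using hj⟩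
  · exact ⟨.inr (), by fin_cases c <;> simp [insertRungBag, ContainsLadder.pendantBag₂]⟩

def insertRungDecomp (td : TreeDecomp G) (B : td.ι)
    (hB : ∀ a : Fin 2, L.f (a, i.castSucc) ∈ td.bag B ∧ L.f (a, i.succ) ∈ td.bag B) :
    TreeDecomp (insertRung G L i) where
  ι := (td.ι ⊕ Unit) ⊕ Unit
  fin := letI := td.fin; inferInstance
  tree := (td.tree.addLeaf B).addLeaf (.inr ())
  isTree := have := td.fin; (td.isTree.addLeaf B).addLeaf _
  bag := insertRungBag L i td
  cover_vertex := insertRungBag_cover_vertex L i td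
  cover_edge _ _ := insertRungBag_cover_edge L i td
  bag_connected v := by
    have hX₁ : ∀ v ∈ L.pendantBag₁ i, ∀ j,
        v ∈ (td.bag j).map .inl → v ∈ (td.bag B).map .inl := by
      intro v hv j hj
      simp only [ContainsLadder.pendantBag₁, Finset.mem_insert, Finset.mem_singleton] at hv
      rcases hv with rfl | rfl | rfl | rfl | rfl <;> simp [Finset.mem_map, hB] at hj ⊢
    have hX₂ : ∀ v ∈ L.pendantBag₂ i, ∀ j,
        v ∈ Sum.elim (fun j => (td.bag j).map .inl) (fun (_ : Unit) => L.pendantBag₁ i) j →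
          v ∈ L.pendantBag₁ i := by
      intro v hv j hj
      simp only [ContainsLadder.pendantBag₂, Finset.mem_insert, Finset.mem_singleton] at hv
      rcases j with j | _ <;> rcases hv with rfl | rfl | rfl | rfl | rfl <;>
        simp_all [Finset.mem_map, ContainsLadder.pendantBag₁]
    have h₁ := addLeaf_induce_preconnected (td.map_inl_bag_preconnected (Fin 2)) hX₁
    have h₂ := addLeaf_induce_preconnected (r := .inr ()) h₁ hX₂ v
    obtain ⟨j, hj⟩ := insertRungBag_cover_vertex L i td v
    exact (connected_iff _).2 ⟨h₂, ⟨j, hj⟩⟩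

theorem insertRungDecomp_width_le (td : TreeDecomp G) (B : td.ι)
    (hB : ∀ a : Fin 2, L.f (a, i.castSucc) ∈ td.bag B ∧ L.f (a, i.succ) ∈ td.bag B) :
    (insertRungDecomp L i td B hB).width ≤ max td.width 4 := by
  have hold := (td.width_le_iff).1 le_rfl
  rw [TreeDecomp.width_le_iff]
  rintro ((j | _) | _)
  · exact (Finset.card_map _).trans_le ((hold j).trans (by omega))
  · exact Finset.card_le_five.trans (by omega)
  · exact Finset.card_le_five.trans (by omega)

end InsertRung

theorem stmt5_general {V : Type} (G : SimpleGraph V) {k : ℕ} (L : ContainsLadder G k)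
    (i : Fin k) (td : TreeDecomp G) (w : ℕ) (hw : td.width ≤ w) (B : td.ι)
    (hB : ∀ a : Fin 2, L.f (a, i.castSucc) ∈ td.bag B ∧ L.f (a, i.succ) ∈ td.bag B) :
    (∃ td' : TreeDecomp (insertRung G L i), td'.width ≤ max w 4) ∧
    (4 ≤ w → treewidth (insertRung G L i) ≤ w) := by
  classical
  have hwidth := (insertRungDecomp_width_le L i td B hB).trans (max_le_max_right 4 hw)
  exact ⟨⟨_, hwidth⟩, fun h4 =>
    (TreeDecomp.treewidth_le_width _).trans (hwidth.trans (max_le le_rfl h4))⟩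

theorem stmt5 {V : Type} [Fintype V] (G : SimpleGraph V) {k : ℕ} (L : ContainsLadder G k)
    (i : Fin k) (td : TreeDecomp G) (w : ℕ) (hw : td.width ≤ w) (B : td.ι)
    (hB : ∀ a : Fin 2, L.f (a, i.castSucc) ∈ td.bag B ∧ L.f (a, i.succ) ∈ td.bag B) :
    (∃ td' : TreeDecomp (insertRung G L i), td'.width ≤ max w 4) ∧
    (4 ≤ w → treewidth (insertRung G L i) ≤ w) :=
  stmt5_general G L i td w hw B hB
end

section
/- Let G be a graph with tw(G) = 3 containing a non-disconnecting ladder of length at least 5, and let S be one of the three central squares of the ladder. Then no bag of any width-3 tree decomposition of G contains all four vertices of S. -/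
open SimpleGraph

/-!
If a bag contained the square `S`, it would equal `S`, since bags have at most four vertices.
Pushing the two columns of `S` outward retracts `G` minus the horizontal edges of `S`, which is
connected because the ladder is non-disconnecting, onto `G - S`; so `G - S` is connected, and
every vertex of `S` has a neighbour outside `S`. Hence all vertices outside `S` live on one side
of the node `B` in the tree, and every vertex of `S` also lies in the bag of the neighbour of `B`
on that side. That bag again contains `S` and is closer to any fixed node whose bag meets
`G - S`; choosing `B` closest gives a contradiction.
-/

namespace SimpleGraph

variable {α : Type} {T : SimpleGraph α}

theorem IsAcyclic.eq_of_adj_of_walk_avoiding (hT : T.IsAcyclic) {b n n' : α}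
    (hn : T.Adj b n) (hn' : T.Adj b n') (w : T.Walk n n') (hw : b ∉ w.support) : n = n' := by
  classical
  have hpath : (Walk.cons hn w.bypass).IsPath := (Walk.cons_isPath_iff hn _).2
    ⟨w.bypass_isPath, fun h => hw (w.support_bypass_subset_support h)⟩
  simpa using (hT.eq_snd_of_adj_start hpath hn' (Walk.end_mem_support _)).symm

theorem Connected.exists_isPath_induce {s : Set α} (hs : (T.induce s).Connected) {a b : α}
    (ha : a ∈ s) (hb : b ∈ s) :
    ∃ p : T.Walk a b, p.IsPath ∧ ∀ c ∈ p.support, c ∈ s := by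
  classical
  obtain ⟨w⟩ := hs.preconnected ⟨a, ha⟩ ⟨b, hb⟩
  refine ⟨(w.map (Embedding.induce s).toHom).bypass, Walk.bypass_isPath _, fun c hc => ?_⟩
  obtain ⟨c', -, rfl⟩ := List.mem_map.1
    (Walk.support_map _ _ ▸ Walk.support_bypass_subset_support _ hc)
  exact c'.2

theorem IsAcyclic.mem_of_induce_connected (hT : T.IsAcyclic) {s : Set α}
    (hs : (T.induce s).Connected) {b m n : α} (hb : b ∈ s) (hm : m ∈ s) (hbn : T.Adj b n)
    (w : T.Walk n m) (hw : b ∉ w.support) : n ∈ s := by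
  obtain ⟨p, hpath, hps⟩ := hs.exists_isPath_induce hb hm
  have hbm : b ≠ m := fun h => hw (h ▸ w.end_mem_support)
  obtain ⟨n', hbn', q, rfl⟩ := Walk.exists_eq_cons_of_ne hbm p
  rw [Walk.cons_isPath_iff] at hpath
  have hnn' :=
    hT.eq_of_adj_of_walk_avoiding hbn hbn' (w.append q.reverse) (by simp [hw, hpath.2])
  exact hnn' ▸ hps n' (by simp)

theorem Preconnected.induce_compl_of_retraction {G H : SimpleGraph α}
    (hH : H.Preconnected) {s : Set α} (φ : α → α) (hφs : ∀ v, φ v ∉ s)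
    (hφ : ∀ v ∉ s, φ v = v)
    (hadj : ∀ x y, H.Adj x y → φ x = φ y ∨ G.Adj (φ x) (φ y)) :
    (G.induce sᶜ).Preconnected := by
  intro x y
  let ψ : α → ↥sᶜ := fun v => ⟨φ v, hφs v⟩
  have hψ : ∀ v : ↥sᶜ, ψ v = v := fun v => Subtype.ext (hφ v v.2)
  rw [← hψ x, ← hψ y, reachable_iff_reflTransGen]
  refine ((reachable_iff_reflTransGen _ _).1 (hH x y)).lift' ψ fun a b hab => ?_
  show Relation.ReflTransGen _ (ψ a) (ψ b)
  rcases hadj a b hab with h | h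
  · rw [show ψ a = ψ b from Subtype.ext h]
  · exact .single h

end SimpleGraph

namespace TreeDecomp

variable {V : Type} {G : SimpleGraph V} (td : TreeDecomp G)

theorem card_bag_le_width_add_one (j : td.ι) : (td.bag j).card ≤ td.width + 1 := by
  let _ : Fintype td.ι := td.fin
  have := Finset.le_sup (f := fun j => (td.bag j).card) (Finset.mem_univ j)
  unfold width
  omega

theorem exists_walk_avoiding_of_mem_bag {B : td.ι} {v : V} (hv : v ∉ td.bag B) {x y : td.ι}
    (hx : v ∈ td.bag x) (hy : v ∈ td.bag y) : ∃ w : td.tree.Walk x y, B ∉ w.support := by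
  obtain ⟨p, -, hp⟩ := (td.bag_connected v).exists_isPath_induce hx hy
  exact ⟨p, fun h => hv (hp B h)⟩

theorem exists_walk_avoiding_of_reachable {B : td.ι} {u v : ↥(↑(td.bag B) : Set V)ᶜ}
    (h : (G.induce (↑(td.bag B) : Set V)ᶜ).Reachable u v) {x y : td.ι} (hx : ↑u ∈ td.bag x)
    (hy : ↑v ∈ td.bag y) : ∃ w : td.tree.Walk x y, B ∉ w.support := by
  obtain ⟨p⟩ := h
  induction p generalizing x with
  | @nil a => exact td.exists_walk_avoiding_of_mem_bag a.2 hx hy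
  | @cons a b _ hab _ ih =>
    obtain ⟨z, haz, hbz⟩ := td.cover_edge hab
    obtain ⟨w₁, hw₁⟩ := td.exists_walk_avoiding_of_mem_bag a.2 hx haz
    obtain ⟨w₂, hw₂⟩ := ih hbz hy
    exact ⟨w₁.append w₂, by simp [hw₁, hw₂]⟩

theorem exists_closer_bag_superset {B C : td.ι} {u : V} (hu : u ∉ td.bag B) (huC : u ∈ td.bag C)
    (hconn : (G.induce (↑(td.bag B) : Set V)ᶜ).Preconnected)
    (hnbr : ∀ s ∈ td.bag B, ∃ t ∉ td.bag B, G.Adj s t) :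
    ∃ n, td.tree.dist n C < td.tree.dist B C ∧ td.bag B ⊆ td.bag n := by
  have hBC : B ≠ C := fun h => hu (h ▸ huC)
  obtain ⟨p, hpath, hlen⟩ := td.isTree.connected.exists_path_of_dist B C
  obtain ⟨n, hBn, q, rfl⟩ := Walk.exists_eq_cons_of_ne hBC p
  rw [Walk.cons_isPath_iff] at hpath
  refine ⟨n, ?_, fun s hs => ?_⟩
  · have := td.tree.dist_le q
    rw [Walk.length_cons] at hlen
    omega
  · obtain ⟨t, ht, hst⟩ := hnbr s hs
    obtain ⟨M, hsM, htM⟩ := td.cover_edge hst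
    obtain ⟨w, hw⟩ :=
      td.exists_walk_avoiding_of_reachable (hconn ⟨u, hu⟩ ⟨t, ht⟩) huC htM
    exact td.isTree.isAcyclic.mem_of_induce_connected (td.bag_connected s) hs hsM hBn
      (q.append w) (by simp [hpath.2, hw])

theorem not_subset_bag {X : Finset V} (hX : X.Nonempty) (hcard : ∀ j, (td.bag j).card ≤ X.card)
    (hconn : (G.induce (↑X : Set V)ᶜ).Preconnected) (hnbr : ∀ s ∈ X, ∃ t ∉ X, G.Adj s t)
    (B : td.ι) : ¬ X ⊆ td.bag B := by
  obtain ⟨s, hs⟩ := hX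
  obtain ⟨u, hu, -⟩ := hnbr s hs
  obtain ⟨C, huC⟩ := td.cover_vertex u
  induction hd : td.tree.dist B C using Nat.strong_induction_on generalizing B with
  | _ d ih =>
    intro hXB
    have hBX : td.bag B = X := (Finset.eq_of_subset_of_card_le hXB (hcard B)).symm
    obtain ⟨n, hn, hXn⟩ :=
      td.exists_closer_bag_superset (hBX ▸ hu) huC (hBX ▸ hconn) (hBX ▸ hnbr)
    exact ih _ (hd ▸ hn) n rfl (hBX ▸ hXn)

end TreeDecomp

theorem ladder_adj {k : ℕ} {p q : Fin 2 × Fin (k + 1)} :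
    (ladder k).Adj p q ↔ (p.1 = q.1 ∧ (p.2.val + 1 = q.2.val ∨ q.2.val + 1 = p.2.val)) ∨
      (p.2 = q.2 ∧ p.1 ≠ q.1) := by
  rw [ladder, fromRel_adj]
  constructor
  · rintro ⟨-, (⟨h1, h2⟩ | ⟨h1, h2⟩) | (⟨h1, h2⟩ | ⟨h1, h2⟩)⟩ <;> grind
  · rintro (⟨h1, h2 | h2⟩ | ⟨h1, h2⟩) <;> refine ⟨fun h => ?_, by grind⟩ <;> grind

section Retraction

variable {k : ℕ} (i : Fin k) (hi : i.val + 2 ≤ k)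

def columnRetraction (c : Fin (k + 1)) : Fin (k + 1) :=
  if c = i.castSucc then ⟨i - 1, by omega⟩ else if c = i.succ then ⟨i + 2, by omega⟩ else c

def squareRetraction : Fin 2 × Fin (k + 1) → Fin 2 × Fin (k + 1) :=
  Prod.map id (columnRetraction i hi)

variable {i hi}

theorem columnRetraction_of_val_add_one_eq {c d : Fin (k + 1)} (hcd : c.val + 1 = d.val)
    (hne : ¬(c = i.castSucc ∧ d = i.succ)) :
    columnRetraction i hi c = columnRetraction i hi d ∨
      (columnRetraction i hi c).val + 1 = (columnRetraction i hi d).val := by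
  unfold columnRetraction
  split_ifs <;> simp only [Fin.ext_iff, Fin.val_castSucc, Fin.val_succ] at * <;> omega

theorem ladder_adj_squareRetraction {p q : Fin 2 × Fin (k + 1)} (hpq : (ladder k).Adj p q)
    (hne : ∀ a : Fin 2, s(p, q) ≠ s((a, i.castSucc), (a, i.succ))) :
    squareRetraction i hi p = squareRetraction i hi q ∨
      (ladder k).Adj (squareRetraction i hi p) (squareRetraction i hi q) := by
  obtain ⟨a, c⟩ := p
  obtain ⟨b, d⟩ := q
  simp only [squareRetraction, Prod.map, id, Prod.mk.injEq, ladder_adj] at hpq ⊢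
  rcases hpq with ⟨rfl, hcd | hdc⟩ | ⟨rfl, hab⟩
  · rcases columnRetraction_of_val_add_one_eq (hi := hi) hcd
      (by rintro ⟨rfl, rfl⟩; exact hne a rfl) with h | h <;> simp [h]
  · rcases columnRetraction_of_val_add_one_eq (hi := hi) hdc
      (by rintro ⟨rfl, rfl⟩; exact hne a Sym2.eq_swap) with h | h <;> simp [h]
  · simp [hab]

theorem squareRetraction_of_ne {p : Fin 2 × Fin (k + 1)} (h₁ : p.2 ≠ i.castSucc)
    (h₂ : p.2 ≠ i.succ) : squareRetraction i hi p = p := by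
  unfold squareRetraction columnRetraction
  rw [Prod.map_apply, if_neg h₁, if_neg h₂]
  rfl

theorem columnRetraction_ne (hi1 : 1 ≤ i.val) (c : Fin (k + 1)) :
    columnRetraction i hi c ≠ i.castSucc ∧ columnRetraction i hi c ≠ i.succ := by
  unfold columnRetraction
  split_ifs <;> simp only [ne_eq, Fin.ext_iff, Fin.val_castSucc, Fin.val_succ] at * <;> omega

theorem ladder_adj_squareRetraction_self (hi1 : 1 ≤ i.val) {p : Fin 2 × Fin (k + 1)}
    (hp : p.2 = i.castSucc ∨ p.2 = i.succ) : (ladder k).Adj p (squareRetraction i hi p) := by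
  obtain ⟨a, c⟩ := p
  rcases hp with rfl | rfl
  · simp [squareRetraction, columnRetraction, ladder_adj, Fin.ext_iff]
    omega
  · simp [squareRetraction, columnRetraction, ladder_adj, Fin.ext_iff]

end Retraction

namespace ContainsLadder

variable {V : Type} {G : SimpleGraph V} {k : ℕ} (L : ContainsLadder G k)

def square (i : Fin k) : Finset V :=
  (Finset.univ ×ˢ {i.castSucc, i.succ}).map ⟨L.f, L.inj⟩

variable {L} {i : Fin k}

theorem mem_square {v : V} :
    v ∈ L.square i ↔ ∃ p, (p.2 = i.castSucc ∨ p.2 = i.succ) ∧ L.f p = v := by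
  simp [square]

theorem card_square : (L.square i).card = 4 := by
  simp [square, Finset.card_pair Fin.castSucc_lt_succ.ne]

theorem square_subset_iff {X : Finset V} :
    L.square i ⊆ X ↔ ∀ a : Fin 2, L.f (a, i.castSucc) ∈ X ∧ L.f (a, i.succ) ∈ X := by
  refine ⟨fun h a => ⟨h (mem_square.2 ⟨_, .inl rfl, rfl⟩),
    h (mem_square.2 ⟨_, .inr rfl, rfl⟩)⟩, fun h v hv => ?_⟩
  obtain ⟨⟨a, c⟩, rfl | rfl, rfl⟩ := mem_square.1 hv
  exacts [(h a).1, (h a).2]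

variable (L) in
noncomputable def squareRetract (hi : i.val + 2 ≤ k) : V → V :=
  Function.extend L.f (L.f ∘ squareRetraction i hi) id

theorem mem_range_of_adj_of_mem_square (hi1 : 1 ≤ i.val) (hi : i.val + 2 ≤ k) {v w : V}
    (hv : v ∈ L.square i) (hvw : G.Adj v w) : w ∈ Set.range L.f := by
  obtain ⟨p, hp, rfl⟩ := mem_square.1 hv
  refine L.attach p ?_ ?_ w hvw <;> rcases hp with hp | hp <;> simp [hp] <;> omega

theorem squareRetract_apply (hi : i.val + 2 ≤ k) (p : Fin 2 × Fin (k + 1)) :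
    L.squareRetract hi (L.f p) = L.f (squareRetraction i hi p) :=
  L.inj.extend_apply _ _ _

theorem squareRetract_notMem_square (hi1 : 1 ≤ i.val) (hi : i.val + 2 ≤ k) (v : V) :
    L.squareRetract hi v ∉ L.square i := by
  by_cases hv : ∃ p, L.f p = v
  · obtain ⟨p, rfl⟩ := hv
    rw [squareRetract_apply, mem_square]
    rintro ⟨q, hq, hqp⟩
    have := columnRetraction_ne (hi := hi) hi1 p.2
    rw [L.inj hqp] at hq
    tauto
  · rw [squareRetract, Function.extend_apply' _ _ _ hv, id]
    exact fun h => hv ((mem_square.1 h).imp fun _ hp => hp.2)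

theorem squareRetract_of_notMem_square (hi : i.val + 2 ≤ k) {v : V} (hv : v ∉ L.square i) :
    L.squareRetract hi v = v := by
  by_cases hv' : ∃ p, L.f p = v
  · obtain ⟨p, rfl⟩ := hv'
    have h₁ : p.2 ≠ i.castSucc := fun h => hv (mem_square.2 ⟨p, .inl h, rfl⟩)
    have h₂ : p.2 ≠ i.succ := fun h => hv (mem_square.2 ⟨p, .inr h, rfl⟩)
    rw [squareRetract_apply, squareRetraction_of_ne h₁ h₂]
  · rw [squareRetract, Function.extend_apply' _ _ _ hv', id]

theorem squareRetract_adj (hi1 : 1 ≤ i.val) (hi : i.val + 2 ≤ k) {x y : V}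
    (hxy : (G.deleteEdges {s(L.f (0, i.castSucc), L.f (0, i.succ)),
      s(L.f (1, i.castSucc), L.f (1, i.succ))}).Adj x y) :
    L.squareRetract hi x = L.squareRetract hi y ∨
      G.Adj (L.squareRetract hi x) (L.squareRetract hi y) := by
  rw [deleteEdges_adj] at hxy
  obtain ⟨hadj, hcut⟩ := hxy
  by_cases hrange : x ∈ Set.range L.f ∧ y ∈ Set.range L.f
  · obtain ⟨⟨p, rfl⟩, ⟨q, rfl⟩⟩ := hrange
    rw [squareRetract_apply, squareRetract_apply, L.induced]
    refine (ladder_adj_squareRetraction ((L.induced p q).1 hadj) fun a h => hcut ?_).imp_left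
      (congrArg L.f)
    have := congrArg (Sym2.map L.f) h
    simp only [Sym2.map_mk] at this
    fin_cases a <;> simp [this]
  · have hout : ∀ v w, G.Adj v w → ¬(v ∈ Set.range L.f ∧ w ∈ Set.range L.f) →
        L.squareRetract hi v = v := fun v w hvw h =>
      squareRetract_of_notMem_square hi fun hv =>
        h ⟨(mem_square.1 hv).imp fun _ hp => hp.2, mem_range_of_adj_of_mem_square hi1 hi hv hvw⟩
    rw [hout x y hadj hrange, hout y x hadj.symm (by rwa [and_comm])]
    exact .inr hadj

theorem preconnected_induce_compl_square (hi1 : 1 ≤ i.val) (hi : i.val + 2 ≤ k)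
    (hcut : ¬L.SquareCut i) : (G.induce (↑(L.square i) : Set V)ᶜ).Preconnected :=
  (not_not.1 hcut).preconnected.induce_compl_of_retraction (L.squareRetract hi)
    (squareRetract_notMem_square hi1 hi) (fun _ hv => squareRetract_of_notMem_square hi hv)
    fun _ _ => squareRetract_adj hi1 hi

theorem exists_adj_notMem_square (hi1 : 1 ≤ i.val) (hi : i.val + 2 ≤ k) :
    ∀ v ∈ L.square i, ∃ w ∉ L.square i, G.Adj v w := by
  intro v hv
  obtain ⟨p, hp, rfl⟩ := mem_square.1 hv
  refine ⟨_, squareRetract_notMem_square hi1 hi (L.f p), ?_⟩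
  rw [squareRetract_apply, L.induced]
  exact ladder_adj_squareRetraction_self hi1 hp

end ContainsLadder

theorem stmt9_general {V : Type} (G : SimpleGraph V) {k : ℕ} (L : ContainsLadder G k)
    (hnd : ¬ L.Disconnects) (i : Fin k) (hi1 : 1 ≤ i.val) (hi2 : i.val ≤ k - 2)
    (td : TreeDecomp G) (hw : td.width = 3) :
    ∀ B : td.ι, ¬ (∀ a : Fin 2,
      L.f (a, i.castSucc) ∈ td.bag B ∧ L.f (a, i.succ) ∈ td.bag B) := by
  have hi : i.val + 2 ≤ k := by omega
  intro B hB
  have hcard : ∀ j, (td.bag j).card ≤ (L.square i).card := fun j => by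
    simpa [ContainsLadder.card_square, hw] using td.card_bag_le_width_add_one j
  have hne : (L.square i).Nonempty := Finset.card_pos.1 (by simp [ContainsLadder.card_square])
  exact td.not_subset_bag hne hcard
    (ContainsLadder.preconnected_induce_compl_square hi1 hi (hnd ⟨i, ·⟩))
    (ContainsLadder.exists_adj_notMem_square hi1 hi) B (ContainsLadder.square_subset_iff.2 hB)

theorem stmt9 {V : Type} [Fintype V] (G : SimpleGraph V) (hG : G.Connected)
    (htw : treewidth G = 3) {k : ℕ} (hk : 5 ≤ k) (L : ContainsLadder G k)
    (hnd : ¬ L.Disconnects) (i : Fin k) (hi1 : 1 ≤ i.val) (hi2 : i.val ≤ k - 2)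
    (td : TreeDecomp G) (hw : td.width = 3) :
    ∀ B : td.ι, ¬ (∀ a : Fin 2,
      L.f (a, i.castSucc) ∈ td.bag B ∧ L.f (a, i.succ) ∈ td.bag B) :=
  stmt9_general G L hnd i hi1 hi2 td hw
end

section
/- The treewidth of a graph equals the maximum of the treewidths of its biconnected components (blocks). -/
open SimpleGraph

/-! Restricting a tree decomposition to a block shows that no block has larger treewidth
than `G`. Conversely, induct on the number of vertices: either `V` itself is a block, or deleting
at most one vertex disconnects `G`, which gives a separation `(A, B)` with `|A ∩ B| ≤ 1` into two
smaller graphs. Joining optimal tree decompositions of `G[A]` and `G[B]` by an edge between two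
bags containing `A ∩ B` gives `tw G ≤ max (tw G[A]) (tw G[B])`. A block of `G[A]` with at least
two vertices is still a block of `G`: it contains a vertex outside `B`, and a biconnected set
meeting `A \ B` cannot reach `B \ A` through the single separating vertex. Blocks with at most one
vertex have treewidth `0`. -/

namespace SimpleGraph

variable {V W ι κ : Type} {G : SimpleGraph V} {H : SimpleGraph W}

lemma IsTree.sum_sup_edge [Finite ι] [Finite κ] {T₁ : SimpleGraph ι} {T₂ : SimpleGraph κ}
    (h₁ : T₁.IsTree) (h₂ : T₂.IsTree) (r₁ : ι) (r₂ : κ) :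
    ((T₁ ⊕g T₂) ⊔ edge (Sum.inl r₁) (Sum.inr r₂)).IsTree := by
  rw [isTree_iff_connected_and_card] at h₁ h₂ ⊢
  refine ⟨h₁.1.sum_sup_edge h₂.1, ?_⟩
  have hnew : s(Sum.inl r₁, Sum.inr r₂) ∉ (T₁ ⊕g T₂).edgeSet :=
    not_adj_sum_inl_inr (G := T₁) (H := T₂) r₁ r₂
  rw [edgeSet_sup, edgeSet_edge_of_ne Sum.inl_ne_inr, Set.union_singleton,
    Nat.card_coe_set_eq, Set.ncard_insert_of_notMem hnew, ← Nat.card_coe_set_eq,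
    Nat.card_congr edgeSetSumEquiv, Nat.card_sum, Nat.card_sum, ← h₁.2, ← h₂.2]
  ring

lemma Connected.induce_image {G' : SimpleGraph W} (f : G →g G') {s : Set V}
    (h : (G.induce s).Connected) : (G'.induce (f '' s)).Connected :=
  h.map (induceHom f (Set.mapsTo_image f s)) (Set.surjective_mapsTo_image_restrict f s)

noncomputable def Embedding.isoInduceImage (f : H ↪g G) (s : Set W) :
    H.induce s ≃g G.induce (f '' s) where
  toEquiv := Equiv.Set.image f s f.injective
  map_rel_iff' := by simp

end SimpleGraph

open SimpleGraph

section TreeDecomp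

variable {V W : Type} {G : SimpleGraph V} {H : SimpleGraph W}

def TreeDecomp.singleBag [Fintype V] (G : SimpleGraph V) : TreeDecomp G where
  ι := Unit
  tree := ⊥
  isTree := .of_subsingleton
  bag _ := Finset.univ
  cover_vertex v := ⟨(), Finset.mem_univ v⟩
  cover_edge u v _ := ⟨(), Finset.mem_univ u, Finset.mem_univ v⟩
  bag_connected v :=
    have : Nonempty {_i : Unit | v ∈ Finset.univ} := ⟨⟨(), Finset.mem_univ v⟩⟩
    IsTree.of_subsingleton.connected

lemma TreeDecomp.width_le_iff_s17 (td : TreeDecomp G) {k : ℕ} :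
    td.width ≤ k ↔ ∀ i, (td.bag i).card ≤ k + 1 := by
  let := td.fin
  simp [TreeDecomp.width, Finset.sup_le_iff]

lemma TreeDecomp.card_bag_le (td : TreeDecomp G) (i : td.ι) : (td.bag i).card ≤ td.width + 1 :=
  td.width_le_iff_s17.1 le_rfl i

lemma TreeDecomp.exists_subset_bag_of_subsingleton (td : TreeDecomp G) {C : Set V}
    (hC : C.Subsingleton) :
    ∃ i, ∀ x ∈ C, x ∈ td.bag i := by
  rcases hC.eq_empty_or_singleton with rfl | ⟨x, rfl⟩
  · obtain ⟨i⟩ := td.isTree.connected.nonempty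
    exact ⟨i, by simp⟩
  · obtain ⟨i, hi⟩ := td.cover_vertex x
    exact ⟨i, by simpa using hi⟩

noncomputable def TreeDecomp.comap (f : H →g G) (hf : Function.Injective f) (td : TreeDecomp G) :
    TreeDecomp H where
  ι := td.ι
  fin := td.fin
  tree := td.tree
  isTree := td.isTree
  bag i := (td.bag i).preimage f hf.injOn
  cover_vertex v := by simpa using td.cover_vertex (f v)
  cover_edge u v huv := by simpa using td.cover_edge (f.map_adj huv)
  bag_connected v := by
    have : {i | v ∈ (td.bag i).preimage f hf.injOn} = {i | f v ∈ td.bag i} := by ext; simp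
    exact this ▸ td.bag_connected (f v)

lemma TreeDecomp.width_comap_le (f : H →g G) (hf : Function.Injective f) (td : TreeDecomp G) :
    (td.comap f hf).width ≤ td.width :=
  (td.comap f hf).width_le_iff_s17.2 fun i =>
    (Finset.card_le_card_of_injOn (s := (td.bag i).preimage f hf.injOn) f
      (fun _ h => Finset.mem_preimage.1 h) hf.injOn).trans (td.card_bag_le i)

lemma treewidth_le_width (td : TreeDecomp G) : treewidth G ≤ td.width :=
  Nat.sInf_le ⟨td, rfl⟩

lemma exists_treeDecomp_width_eq [Finite V] (G : SimpleGraph V) :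
    ∃ td : TreeDecomp G, td.width = treewidth G := by
  have := Fintype.ofFinite V
  exact Nat.sInf_mem (s := Set.range fun td : TreeDecomp G => td.width) ⟨_, .singleBag G, rfl⟩

lemma treewidth_eq_zero [Subsingleton V] (G : SimpleGraph V) : treewidth G = 0 := by
  have := Fintype.ofFinite V
  refine Nat.eq_zero_of_le_zero <| (treewidth_le_width (.singleBag G)).trans ?_
  exact (TreeDecomp.singleBag G).width_le_iff_s17.2 fun _ => Finset.card_le_one_of_subsingleton _

lemma treewidth_le_of_injective [Finite V] (f : H →g G) (hf : Function.Injective f) :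
    treewidth H ≤ treewidth G := by
  obtain ⟨td, htd⟩ := exists_treeDecomp_width_eq G
  exact htd ▸ (treewidth_le_width _).trans (td.width_comap_le f hf)

lemma treewidth_induce_le [Finite V] (G : SimpleGraph V) (s : Set V) :
    treewidth (G.induce s) ≤ treewidth G :=
  let ι := Embedding.induce (G := G) s
  treewidth_le_of_injective ι.toHom ι.injective

lemma SimpleGraph.Iso.treewidth_eq [Finite V] [Finite W] (e : G ≃g H) :
    treewidth G = treewidth H :=
  le_antisymm (treewidth_le_of_injective e.toHom e.injective)
    (treewidth_le_of_injective e.symm.toHom e.symm.injective)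

end TreeDecomp

section Separation

variable {V : Type} {G : SimpleGraph V} {A B : Set V}

structure IsSeparation (G : SimpleGraph V) (A B : Set V) : Prop where
  mem_or_mem : ∀ v, v ∈ A ∨ v ∈ B
  adj_mem : ∀ ⦃u w⦄, G.Adj u w → u ∈ A ∧ w ∈ A ∨ u ∈ B ∧ w ∈ B

lemma IsSeparation.symm (h : IsSeparation G A B) : IsSeparation G B A :=
  ⟨fun v => (h.mem_or_mem v).symm, fun _ _ huw => (h.adj_mem huw).symm⟩

section Glue

variable (h : IsSeparation G A B) (td₁ : TreeDecomp (G.induce A)) (td₂ : TreeDecomp (G.induce B))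
  (r₁ : td₁.ι) (r₂ : td₂.ι)
  (hr : ∀ x (hA : x ∈ A) (hB : x ∈ B), ⟨x, hA⟩ ∈ td₁.bag r₁ ∧ ⟨x, hB⟩ ∈ td₂.bag r₂)

noncomputable def IsSeparation.glue : TreeDecomp G where
  ι := td₁.ι ⊕ td₂.ι
  fin := let := td₁.fin; let := td₂.fin; inferInstance
  tree := (td₁.tree ⊕g td₂.tree) ⊔ edge (Sum.inl r₁) (Sum.inr r₂)
  isTree := let := td₁.fin; let := td₂.fin; td₁.isTree.sum_sup_edge td₂.isTree r₁ r₂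
  bag := Sum.elim (fun i => (td₁.bag i).map (Function.Embedding.subtype _))
    (fun j => (td₂.bag j).map (Function.Embedding.subtype _))
  cover_vertex v := by
    rcases h.mem_or_mem v with hv | hv
    · obtain ⟨i, hi⟩ := td₁.cover_vertex ⟨v, hv⟩
      exact ⟨.inl i, by simpa [hv] using hi⟩
    · obtain ⟨j, hj⟩ := td₂.cover_vertex ⟨v, hv⟩
      exact ⟨.inr j, by simpa [hv] using hj⟩
  cover_edge u w huw := by
    rcases h.adj_mem huw with ⟨hu, hw⟩ | ⟨hu, hw⟩
    · obtain ⟨i, hi⟩ := td₁.cover_edge (show (G.induce A).Adj ⟨u, hu⟩ ⟨w, hw⟩ from huw)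
      exact ⟨.inl i, by simpa [hu, hw] using hi⟩
    · obtain ⟨j, hj⟩ := td₂.cover_edge (show (G.induce B).Adj ⟨u, hu⟩ ⟨w, hw⟩ from huw)
      exact ⟨.inr j, by simpa [hu, hw] using hj⟩
  bag_connected v := by
    have inl_conn (hA : v ∈ A) :
        (((td₁.tree ⊕g td₂.tree) ⊔ edge (Sum.inl r₁) (Sum.inr r₂)).induce
          (Sum.inl '' {i | ⟨v, hA⟩ ∈ td₁.bag i})).Connected :=
      (td₁.bag_connected ⟨v, hA⟩).induce_image
        ((Hom.ofLE le_sup_left).comp Embedding.sumInl.toHom)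
    have inr_conn (hB : v ∈ B) :
        (((td₁.tree ⊕g td₂.tree) ⊔ edge (Sum.inl r₁) (Sum.inr r₂)).induce
          (Sum.inr '' {j | ⟨v, hB⟩ ∈ td₂.bag j})).Connected :=
      (td₂.bag_connected ⟨v, hB⟩).induce_image
        ((Hom.ofLE le_sup_left).comp Embedding.sumInr.toHom)
    by_cases hA : v ∈ A <;> by_cases hB : v ∈ B
    -- by `hr`, the subtrees of bags containing `v` on the two sides meet the edge `r₁r₂`
    · convert connected_induce_union (inl_conn hA).preconnected (inr_conn hB).preconnected
        (Set.mem_image_of_mem _ (hr v hA hB).1) (Set.mem_image_of_mem _ (hr v hA hB).2)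
        (by simp [edge]) using 2 <;> ext (i | j) <;> simp [hA, hB]
    · convert inl_conn hA using 2 <;> ext (i | j) <;> simp [hA, hB]
    · convert inr_conn hB using 2 <;> ext (i | j) <;> simp [hA, hB]
    · exact ((h.mem_or_mem v).elim hA hB).elim

lemma IsSeparation.width_glue_le :
    (h.glue td₁ td₂ r₁ r₂ hr).width ≤ max td₁.width td₂.width := by
  refine (h.glue td₁ td₂ r₁ r₂ hr).width_le_iff_s17.2 ?_
  rintro (i | j)
  · simpa [IsSeparation.glue] using
      (td₁.card_bag_le i).trans (Nat.add_le_add_right (le_max_left _ _) 1)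
  · simpa [IsSeparation.glue] using
      (td₂.card_bag_le j).trans (Nat.add_le_add_right (le_max_right _ _) 1)

end Glue

lemma IsSeparation.treewidth_le [Finite V] (h : IsSeparation G A B) (hAB : (A ∩ B).Subsingleton) :
    treewidth G ≤ max (treewidth (G.induce A)) (treewidth (G.induce B)) := by
  obtain ⟨td₁, h₁⟩ := exists_treeDecomp_width_eq (G.induce A)
  obtain ⟨td₂, h₂⟩ := exists_treeDecomp_width_eq (G.induce B)
  obtain ⟨r₁, hr₁⟩ := td₁.exists_subset_bag_of_subsingleton (C := {a : A | (a : V) ∈ B})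
    ((hAB.preimage Subtype.val_injective).anti fun a ha => ⟨a.2, ha⟩)
  obtain ⟨r₂, hr₂⟩ := td₂.exists_subset_bag_of_subsingleton (C := {b : B | (b : V) ∈ A})
    ((hAB.preimage Subtype.val_injective).anti fun b hb => ⟨hb, b.2⟩)
  rw [← h₁, ← h₂]
  exact (treewidth_le_width _).trans
    (h.width_glue_le td₁ td₂ r₁ r₂ fun x hA hB => ⟨hr₁ ⟨x, hA⟩ hB, hr₂ ⟨x, hB⟩ hA⟩)

end Separation

section Blocks

variable {V W : Type} {G : SimpleGraph V} {H : SimpleGraph W} {A B : Set V}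

lemma noCutvertex_image_iff (f : H ↪g G) {S : Set W} :
    NoCutvertex G (f '' S) ↔ NoCutvertex H S := by
  simp only [NoCutvertex, Set.forall_mem_image]
  refine forall₂_congr fun v _ => ?_
  rw [← Set.image_singleton, ← Set.image_sdiff f.injective]
  exact (f.isoInduceImage (S \ {v})).preconnected_iff.symm

lemma NoCutvertex.preconnected_induce_sdiff {T C : Set V} (hnc : NoCutvertex G T)
    (hT : (G.induce T).Preconnected) (hC : C.Subsingleton) : (G.induce (T \ C)).Preconnected := by
  rcases hC.eq_empty_or_singleton with rfl | ⟨c, rfl⟩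
  · rwa [Set.sdiff_empty]
  · by_cases hc : c ∈ T
    · exact hnc c hc
    · rwa [Set.sdiff_singleton_eq_self hc]

lemma IsSeparation.mem_of_reachable (h : IsSeparation G A B) {D : Set V}
    (hD : Disjoint D (A ∩ B)) {u w : D} (huw : (G.induce D).Reachable u w) (hu : (u : V) ∈ A) :
    (w : V) ∈ A := by
  by_contra hw
  obtain ⟨p⟩ := huw
  obtain ⟨d, -, hd₁, hd₂⟩ := p.exists_boundary_dart {x | (x : V) ∈ A} hu hw
  have hd : (d.fst : V) ∈ B := ((h.adj_mem d.adj).resolve_left fun h' => hd₂ h'.2).1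
  exact Set.disjoint_left.1 hD d.fst.2 ⟨hd₁, hd⟩

lemma IsSeparation.isBlock_image (h : IsSeparation G A B) (hAB : (A ∩ B).Subsingleton)
    {S : Set A} (hS : IsBlock (G.induce A) S) (hS₂ : S.Nontrivial) :
    IsBlock G (Subtype.val '' S) := by
  obtain ⟨hne, hconn, hnc, hmax⟩ := hS
  let ι := Embedding.induce (G := G) A
  refine ⟨hne.image _, (ι.isoInduceImage S).connected_iff.1 hconn, (noCutvertex_image_iff ι).2 hnc,
    fun T hST hT hncT => ?_⟩
  obtain ⟨s, hsS, hsB⟩ : ∃ s ∈ S, (s : V) ∉ B := by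
    by_contra! hall
    obtain ⟨x, hx, y, hy, hxy⟩ := hS₂
    exact hxy (Subtype.ext (hAB ⟨x.2, hall x hx⟩ ⟨y.2, hall y hy⟩))
  have hTA : T ⊆ A := by
    intro y hyT
    by_cases hy : y ∈ A ∩ B
    · exact hy.1
    have hs : (s : V) ∈ T \ (A ∩ B) := ⟨hST ⟨s, hsS, rfl⟩, fun h' => hsB h'.2⟩
    exact h.mem_of_reachable Set.disjoint_sdiff_left
      (hncT.preconnected_induce_sdiff hT.preconnected hAB ⟨s, hs⟩ ⟨y, hyT, hy⟩) s.2
  have hT' : Subtype.val '' (Subtype.val ⁻¹' T : Set A) = T := by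
    rw [Subtype.image_preimage_coe, Set.inter_eq_right.2 hTA]
  rw [← hT'] at hT hncT ⊢
  exact congrArg _ (hmax _ (fun x hx => hST ⟨x, hx, rfl⟩) ((ι.isoInduceImage _).connected_iff.2 hT)
    ((noCutvertex_image_iff ι).1 hncT))

noncomputable def maxBlockTreewidth (G : SimpleGraph V) : ℕ :=
  sSup {w : ℕ | ∃ S : Set V, IsBlock G S ∧ w = treewidth (G.induce S)}

lemma maxBlockTreewidth_le_treewidth [Finite V] (G : SimpleGraph V) :
    maxBlockTreewidth G ≤ treewidth G :=
  csSup_le' fun _ ⟨S, _, hw⟩ => hw ▸ treewidth_induce_le G S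

lemma treewidth_induce_le_maxBlockTreewidth [Finite V] {S : Set V} (hS : IsBlock G S) :
    treewidth (G.induce S) ≤ maxBlockTreewidth G :=
  le_csSup ⟨treewidth G, fun _ ⟨T, _, hw⟩ => hw ▸ treewidth_induce_le G T⟩ ⟨S, hS, rfl⟩

lemma IsSeparation.maxBlockTreewidth_induce_le [Finite V] (h : IsSeparation G A B)
    (hAB : (A ∩ B).Subsingleton) : maxBlockTreewidth (G.induce A) ≤ maxBlockTreewidth G := by
  refine csSup_le' ?_
  rintro _ ⟨S, hS, rfl⟩
  rcases S.subsingleton_or_nontrivial with hS₁ | hS₂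
  · have := hS₁.coe_sort
    rw [treewidth_eq_zero]
    exact Nat.zero_le _
  · rw [((Embedding.induce A).isoInduceImage S).treewidth_eq]
    exact treewidth_induce_le_maxBlockTreewidth (h.isBlock_image hAB hS hS₂)

/-- `D = univ` if `G` is disconnected, `D = univ \ {v}` if `v` is a cutvertex. -/
lemma exists_not_preconnected_of_not_isBlock_univ [Nonempty V] (h : ¬IsBlock G Set.univ) :
    ∃ D : Set V, Dᶜ.Subsingleton ∧ ¬(G.induce D).Preconnected := by
  by_contra! hD
  have compl_sdiff (v : V) : (Set.univ \ {v})ᶜ.Subsingleton :=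
    Set.subsingleton_singleton.anti fun _ hz => of_not_not fun hzv => hz ⟨trivial, hzv⟩
  exact h ⟨Set.univ_nonempty, ⟨hD _ (by simp)⟩, fun v _ => hD _ (compl_sdiff v),
    fun T hT _ _ => Set.eq_univ_of_univ_subset hT⟩

lemma exists_isSeparation_of_not_preconnected {D : Set V} (h : ¬(G.induce D).Preconnected) :
    ∃ A B, IsSeparation G A B ∧ A ∩ B ⊆ Dᶜ ∧ A ≠ Set.univ ∧ B ≠ Set.univ := by
  obtain ⟨x, y, hxy⟩ : ∃ x y, ¬(G.induce D).Reachable x y := by simpa [Preconnected] using h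
  let K : Set V := {z | ∃ hz : z ∈ D, (G.induce D).Reachable x ⟨z, hz⟩}
  have closed {a b : V} (hab : G.Adj a b) (ha : a ∈ K) (hb : b ∈ D) : b ∈ K :=
    ⟨hb, ha.2.trans (show (G.induce D).Adj ⟨a, ha.1⟩ ⟨b, hb⟩ from hab).reachable⟩
  refine ⟨Dᶜ ∪ K, Kᶜ, ⟨fun z => (em (z ∈ K)).imp Or.inr id, fun u w huw => ?_⟩,
    fun z hz => hz.1.resolve_right hz.2, fun hA => ?_, fun hB => ?_⟩
  · by_cases hu : u ∈ K <;> by_cases hw : w ∈ K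
    · exact .inl ⟨.inr hu, .inr hw⟩
    · exact .inl ⟨.inr hu, .inl fun hwD => hw (closed huw hu hwD)⟩
    · exact .inl ⟨.inl fun huD => hu (closed huw.symm hw huD), .inr hw⟩
    · exact .inr ⟨hu, hw⟩
  · rcases hA ▸ Set.mem_univ y.1 with hyD | ⟨_, hy⟩
    · exact hyD y.2
    · exact hxy hy
  · exact (hB ▸ Set.mem_univ x.1 : x.1 ∈ Kᶜ) ⟨x.2, .rfl⟩

theorem treewidth_le_maxBlockTreewidth [Finite V] (G : SimpleGraph V) :
    treewidth G ≤ maxBlockTreewidth G := by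
  induction hn : Nat.card V using Nat.strong_induction_on generalizing V with
  | _ n ih =>
  rcases isEmpty_or_nonempty V with hV | hV
  · simp [treewidth_eq_zero]
  by_cases hblock : IsBlock G Set.univ
  · exact (induceUnivIso G).treewidth_eq ▸ treewidth_induce_le_maxBlockTreewidth hblock
  obtain ⟨D, hDc, hD⟩ := exists_not_preconnected_of_not_isBlock_univ hblock
  obtain ⟨A, B, hsep, hAB, hA, hB⟩ := exists_isSeparation_of_not_preconnected hD
  have hAB' : (A ∩ B).Subsingleton := hDc.anti hAB
  have card_lt {C : Set V} (hC : C ≠ Set.univ) : Nat.card C < n := hn ▸ Set.ncard_lt_card hC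
  calc treewidth G ≤ max (treewidth (G.induce A)) (treewidth (G.induce B)) :=
        hsep.treewidth_le hAB'
    _ ≤ max (maxBlockTreewidth (G.induce A)) (maxBlockTreewidth (G.induce B)) :=
        max_le_max (ih _ (card_lt hA) _ rfl) (ih _ (card_lt hB) _ rfl)
    _ ≤ maxBlockTreewidth G :=
        max_le (hsep.maxBlockTreewidth_induce_le hAB')
          (hsep.symm.maxBlockTreewidth_induce_le (Set.inter_comm A B ▸ hAB'))

end Blocks

theorem stmt17 {V : Type} [Fintype V] (G : SimpleGraph V) :
    treewidth G = sSup {w : ℕ | ∃ S : Set V, IsBlock G S ∧ w = treewidth (G.induce S)} :=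
  le_antisymm (treewidth_le_maxBlockTreewidth G) (maxBlockTreewidth_le_treewidth G)
end
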